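/- arXiv:math/0312250 — 3 statements merged into one kernel-verified Lean document; each statement's English description precedes it below -/
import Mathlib

section
/- Let P be a k×ℓ pipe dream and let α|P be the k×(ℓ+α) pipe dream obtained by adding α columns, each consisting of k crossing tiles, to the left side of P. Then P simplifies to D if and only if α|P simplifies to α|D. -/
open scoped Classical

noncomputable section

/-! ### Pipe dreams and Demazure products -/

/-- A pipe dream: the set of crossing tiles (0-based positions). -/
abbrev PD := Finset (ℕ × ℕ)

/-- The simple reflection `s_i` (0-based: swaps `i` and `i+1`). -/
def sGen (i : ℕ) : Equiv.Perm ℕ := Equiv.swap i (i + 1)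

/-- Coxeter length of a permutation of `ℕ`: the number of inversions. -/
noncomputable def clen (v : Equiv.Perm ℕ) : ℕ :=
  Set.ncard {pq : ℕ × ℕ | pq.1 < pq.2 ∧ v pq.2 < v pq.1}

/-- One step of the Demazure (0-Hecke) product: multiply by `s_i` unless it drops length. -/
noncomputable def demStep (w : Equiv.Perm ℕ) (i : ℕ) : Equiv.Perm ℕ :=
  if clen w < clen (w * sGen i) then w * sGen i else w

/-- Demazure product of a word in the simple reflections. -/
noncomputable def demWord (word : List ℕ) : Equiv.Perm ℕ := word.foldl demStep 1

/-- A pipe dream fits in the `k × l` grid. -/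
def InGrid (k l : ℕ) (P : PD) : Prop := ∀ pq ∈ P, pq.1 < k ∧ pq.2 < l

/-- The crossing tiles of `P` in reading order: along rows, right to left,
top to bottom. -/
def posList (k l : ℕ) (P : PD) : List (ℕ × ℕ) :=
  (List.range k).flatMap fun i =>
    ((List.range l).reverse).filterMap fun j => if (i, j) ∈ P then some (i, j) else none

/-- The word of a pipe dream: the crossing tile at (0-based) `(i,j)` contributes the
letter `i + j` (antidiagonal index), read along rows right-to-left, top-to-bottom. -/
def pdWord (k l : ℕ) (P : PD) : List ℕ := (posList k l P).map fun pq => pq.1 + pq.2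

/-- The Demazure product `δ(P)` of a pipe dream. -/
noncomputable def pdDelta (k l : ℕ) (P : PD) : Equiv.Perm ℕ := demWord (pdWord k l P)

/-- `P` rotated through 180 degrees inside the `k × l` grid. -/
def rot180 (k l : ℕ) (P : PD) : PD := P.image fun pq => (k - 1 - pq.1, l - 1 - pq.2)

/-- The simplification of `P`: omit the `t`-th letter whenever the Demazure product of
the length-`t` prefix equals that of the length-`t+1` prefix (lexicographically first
subword with full Demazure product). -/
noncomputable def simplification (k l : ℕ) (P : PD) : PD :=
  P.filter fun pos => ∀ t : ℕ, (posList k l P)[t]? = some pos →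
    demWord ((pdWord k l P).take (t + 1)) ≠ demWord ((pdWord k l P).take t)

/-! ### Partial permutations -/

/-- A `k × l` partial permutation, as the relation `rel p q` ⟺ "entry 1 at `(p,q)`"
(0-based): at most one nonzero entry in each row and column. -/
def IsPartialPerm (k l : ℕ) (rel : ℕ → ℕ → Prop) : Prop :=
  (∀ p q, rel p q → p < k ∧ q < l) ∧
  (∀ p q q', rel p q → rel p q' → q = q') ∧
  (∀ p p' q, rel p q → rel p' q → p = p')

/-- `v ∈ S_∞` is a completion of the `k × l` partial permutation `rel`:
a (finitely supported) permutation whose upper-left `k × l` corner is `rel`. -/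
def IsCompletion (k l : ℕ) (rel : ℕ → ℕ → Prop) (v : Equiv.Perm ℕ) : Prop :=
  (∃ N, ∀ i, N ≤ i → v i = i) ∧ ∀ p q, p < k → q < l → (rel p q ↔ v p = q)

/-- `v = w̃` is the minimal-length completion of `rel`. -/
def IsMinCompletion (k l : ℕ) (rel : ℕ → ℕ → Prop) (v : Equiv.Perm ℕ) : Prop :=
  IsCompletion k l rel v ∧ ∀ v', IsCompletion k l rel v' → clen v ≤ clen v'

/-- The minimal-length completion `w̃` of a partial permutation. -/
noncomputable def minComp (k l : ℕ) (rel : ℕ → ℕ → Prop) : Equiv.Perm ℕ :=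
  Classical.epsilon (IsMinCompletion k l rel)

/-- `P ∈ 𝒫(w)`: pipe dreams in the `k × l` grid with Demazure product `w̃`. -/
def PipeDreamsFor (k l : ℕ) (rel : ℕ → ℕ → Prop) (P : PD) : Prop :=
  InGrid k l P ∧ pdDelta k l P = minComp k l rel


/-! ### Block decompositions and Zelevinsky permutations -/

/-- `rowSum r j = r 0 + ⋯ + r (j-1)`. -/
def rowSum (r : ℕ → ℕ) (j : ℕ) : ℕ := ∑ q ∈ Finset.range j, r q

/-- Total size `d = r 0 + ⋯ + r n`. -/
def dTot (n : ℕ) (r : ℕ → ℕ) : ℕ := rowSum r (n + 1)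

/-- Global row `p` lies in block row `j` (block rows counted from the top, of heights
`r 0, …, r n`). -/
def InBlockRow (r : ℕ → ℕ) (j p : ℕ) : Prop := rowSum r j ≤ p ∧ p < rowSum r (j + 1)

/-- Global column `q` lies in block column `i` *from the right* (widths `r 0, …, r n`
from the right). -/
def InBlockCol (n : ℕ) (r : ℕ → ℕ) (i q : ℕ) : Prop :=
  dTot n r - rowSum r (i + 1) ≤ q ∧ q < dTot n r - rowSum r i

/-- `v` is a Zelevinsky permutation for the block decomposition given by
`r 0, …, r n`: it is a `d × d` permutation matrix (fixes everything from `d` on),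
the blocks `B_{ji}` with `i ≥ j + 2` vanish, and the nonzero entries proceed from
northwest to southeast within each block row and block column. -/
def IsZelevinsky (n : ℕ) (r : ℕ → ℕ) (v : Equiv.Perm ℕ) : Prop :=
  (∀ p, dTot n r ≤ p → v p = p) ∧
  (∀ p, p < dTot n r → ∀ j i, j ≤ n → i ≤ n → InBlockRow r j p →
    InBlockCol n r i (v p) → i ≤ j + 1) ∧
  (∀ p p', p < p' → p' < dTot n r →
    ((∃ j ≤ n, InBlockRow r j p ∧ InBlockRow r j p') ∨
     (∃ i ≤ n, InBlockCol n r i (v p) ∧ InBlockCol n r i (v p'))) → v p < v p')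

/-- The rank array of a Zelevinsky permutation: `r_{ij}` is the number of nonzero
entries of `v` in the blocks weakly southeast of `B_{ji}`. -/
def rankArray (n : ℕ) (r : ℕ → ℕ) (v : Equiv.Perm ℕ) (i j : ℕ) : ℕ :=
  ((Finset.range (dTot n r)).filter fun p =>
    rowSum r j ≤ p ∧ dTot n r - rowSum r (i + 1) ≤ v p).card

/-- `v = v(Hom)`: the unique Zelevinsky permutation with entrywise maximal rank array. -/
def IsHomZel (n : ℕ) (r : ℕ → ℕ) (v : Equiv.Perm ℕ) : Prop :=
  IsZelevinsky n r v ∧ ∀ v', IsZelevinsky n r v' →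
    ∀ i j, j ≤ i → i ≤ n → rankArray n r v' i j ≤ rankArray n r v i j

/-- `vm = v(m + r)` where `v = v(r)`: the Zelevinsky permutation for the ranks
`m + r 0, …, m + r n` whose rank array is obtained by adding `m` to every entry of
the rank array of `v`. -/
def IsShiftedZel (n : ℕ) (r : ℕ → ℕ) (v : Equiv.Perm ℕ) (m : ℕ) (vm : Equiv.Perm ℕ) : Prop :=
  IsZelevinsky n (fun j => m + r j) vm ∧
  ∀ i j, j ≤ i → i ≤ n →
    rankArray n (fun j => m + r j) vm i j = m + rankArray n r v i j

/-- The Ferrers shape `D_Hom` of all positions strictly above the block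
superantidiagonal (blocks `B_{ji}` with `i ≥ j + 2`). -/
def DHom (n : ℕ) (r : ℕ → ℕ) : PD :=
  (Finset.range (dTot n r) ×ˢ Finset.range (dTot n r)).filter fun pq =>
    ∃ j ≤ n, ∃ i ≤ n, InBlockRow r j pq.1 ∧ InBlockCol n r i pq.2 ∧ j + 2 ≤ i

/-- `P(P_1, …, P_n)`: the `d × d` pipe dream with every block strictly above the block
superantidiagonal filled with crossing tiles, the superantidiagonal `r (j-1) × r j`
block in block row `j - 1` equal to `P j`, and all other blocks empty. -/
def assemble (n : ℕ) (r : ℕ → ℕ) (P : ℕ → PD) : PD :=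
  (Finset.range (dTot n r) ×ˢ Finset.range (dTot n r)).filter fun pq =>
    (∃ j ≤ n, ∃ i ≤ n, InBlockRow r j pq.1 ∧ InBlockCol n r i pq.2 ∧ j + 2 ≤ i) ∨
    (∃ j, 1 ≤ j ∧ j ≤ n ∧ InBlockRow r (j - 1) pq.1 ∧ InBlockCol n r j pq.2 ∧
      (pq.1 - rowSum r (j - 1), pq.2 - (dTot n r - rowSum r (j + 1))) ∈ P j)

/-! ### Lacing diagrams -/

/-- A lacing diagram for ranks `r 0, …, r n`: a list `w_1, …, w_n` of partial
permutations, `w_j` of size `r (j-1) × r j` (encoded as relations, with `L j` empty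
for `j` out of range). -/
def IsLacingDiagram (n : ℕ) (r : ℕ → ℕ) (L : ℕ → ℕ → ℕ → Prop) : Prop :=
  (∀ j, 1 ≤ j → j ≤ n → IsPartialPerm (r (j - 1)) (r j) (L j)) ∧
  (∀ j, j = 0 ∨ n < j → L j = fun _ _ => False)

/-- A choice of pipe dreams `P_1, …, P_n` with `P̌_j ∈ 𝒫(w_j)` for all `j`. -/
def LacingChoices (n : ℕ) (r : ℕ → ℕ) (L : ℕ → ℕ → ℕ → Prop) (P : ℕ → PD) : Prop :=
  ∀ j, 1 ≤ j → j ≤ n → InGrid (r (j - 1)) (r j) (P j) ∧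
    PipeDreamsFor (r (j - 1)) (r j) (L j) (rot180 (r (j - 1)) (r j) (P j))

/-- The Demazure product of the lacing diagram `L` is the rank array of the Zelevinsky
permutation `v`: for some (equivalently every) choice of pipe dreams `P_j` with
`P̌_j ∈ 𝒫(w_j)`, the Demazure product of `P(P_1, …, P_n)` is `v`. -/
def LacingDem (n : ℕ) (r : ℕ → ℕ) (L : ℕ → ℕ → ℕ → Prop) (v : Equiv.Perm ℕ) : Prop :=
  (∃ P, LacingChoices n r L P) ∧
  ∀ P, LacingChoices n r L P →
    pdDelta (dTot n r) (dTot n r) (assemble n r P) = v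

/-- `L(r)`: lacing diagrams whose Demazure product is the rank array of `v = v(r)`. -/
def LacingSet (n : ℕ) (r : ℕ → ℕ) (v : Equiv.Perm ℕ) : Set (ℕ → ℕ → ℕ → Prop) :=
  {L | IsLacingDiagram n r L ∧ LacingDem n r L v}

/-- `m + w`: let the partial permutation act on `{m, m+1, …}` instead of `{0, 1, …}`. -/
def shiftRel (m : ℕ) (rel : ℕ → ℕ → Prop) : ℕ → ℕ → Prop :=
  fun p q => m ≤ p ∧ m ≤ q ∧ rel (p - m) (q - m)

/-- `m + w` for a lacing diagram, componentwise. -/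
def shiftDiag (m : ℕ) (L : ℕ → ℕ → ℕ → Prop) : ℕ → ℕ → ℕ → Prop :=
  fun j => shiftRel m (L j)

/-- `l(w) = Σ_j l(w̃_j)` for a lacing diagram. -/
noncomputable def lenLacing (n : ℕ) (r : ℕ → ℕ) (L : ℕ → ℕ → ℕ → Prop) : ℕ :=
  ∑ j ∈ Finset.Icc 1 n, clen (minComp (r (j - 1)) (r j) (L j))


/-! ### Double Grothendieck polynomials

We encode a Laurent polynomial in the row alphabet `z` and column alphabet `ż` as an
honest polynomial in the variables `z i = X (Sum.inl i)` and `b j = X (Sum.inr j)`,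
where `b j` stands for the reciprocal `1/ż j` (all the `G`'s are polynomials in the
`z i` and the `ż j⁻¹`; in particular `1 - z i / ż j = 1 - z i * b j`). -/

/-- The ambient polynomial ring. -/
abbrev GR : Type := MvPolynomial (ℕ ⊕ ℕ) ℚ

/-- The row variable `z i` (0-based). -/
noncomputable def Zv (i : ℕ) : GR := MvPolynomial.X (Sum.inl i)

/-- The column variable `b j = 1 / ż j` (0-based). -/
noncomputable def Bv (j : ℕ) : GR := MvPolynomial.X (Sum.inr j)

/-- Exact division in a ring (junk value `0` if `b ∤ a`). -/
noncomputable def exactDiv (a b : GR) : GR := if h : ∃ c, a = b * c then h.choose else 0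

/-- The `i`-th Demazure operator
`∂_i f = (z_{i+1} f(z_i, z_{i+1}) - z_i f(z_{i+1}, z_i)) / (z_{i+1} - z_i)`
(0-based `i`; it acts on the `z` alphabet only). -/
noncomputable def demOp (i : ℕ) (f : GR) : GR :=
  exactDiv
    (Zv (i + 1) * f -
      Zv i * (MvPolynomial.rename (fun s => Equiv.swap (Sum.inl i) (Sum.inl (i + 1)) s) f))
    (Zv (i + 1) - Zv i)

/-- The longest element `w_0` of `S_k` (0-based; fixes everything from `k` on). -/
def w0 (k : ℕ) : Equiv.Perm ℕ :=
  Function.Involutive.toPerm (fun i => if i < k then k - 1 - i else i)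
    (by intro i; dsimp only; split_ifs <;> omega)

/-- The top double Grothendieck polynomial
`G_{w_0}(z/ż) = ∏_{i + j ≤ k} (1 - z_i/ż_j)` (1-based indices `i, j ≥ 1`). -/
noncomputable def GrothTop (k : ℕ) : GR :=
  ∏ pq ∈ (Finset.range k ×ˢ Finset.range k).filter (fun pq => pq.1 + pq.2 + 2 ≤ k),
    (1 - Zv pq.1 * Bv pq.2)

/-- Auxiliary fuelled recursion computing double Grothendieck polynomials via
`G_{v s_i} = ∂_i G_v` whenever `l(v s_i) < l(v)`. -/
noncomputable def GrothAux (k : ℕ) : ℕ → Equiv.Perm ℕ → GR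
  | 0, v => if v = w0 k then GrothTop k else 0
  | fuel + 1, v =>
    if v = w0 k then GrothTop k
    else if h : ∃ i, i + 2 ≤ k ∧ v i < v (i + 1) then
      demOp (Nat.find h) (GrothAux k fuel (v * sGen (Nat.find h)))
    else 0

/-- The double Grothendieck polynomial `G_v(z/ż)` of `v ∈ S_k`. -/
noncomputable def Groth (k : ℕ) (v : Equiv.Perm ℕ) : GR := GrothAux k (k * k) v

/-- The least `N` such that `v` fixes everything from `N` on. -/
noncomputable def permBound (v : Equiv.Perm ℕ) : ℕ := sInf {N | ∀ i, N ≤ i → v i = i}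

/-- The double Grothendieck polynomial of a finitely supported permutation
(independent of the choice of `k`). -/
noncomputable def GrothPerm (v : Equiv.Perm ℕ) : GR := Groth (permBound v) v


/-! ### Quiver alphabets

For ranks `r 0, …, r n` with `d = r 0 + ⋯ + r n`, the row alphabet
`x = x^0, …, x^n` is the concatenation of alphabets of sizes `r 0, …, r n`: the global
row variable `z p` (for `p` in block row `j` at offset `a`) *is* the letter `x^j_{a+1}`.
Likewise the column alphabet `ȳ = y^n, …, y^0` is the concatenation of alphabets of
sizes `r n, …, r 0`: the global column variable `ż q` for `q` in block column `i`
(from the right) at offset `a` (from the left of the block) is the letter `y^i_{a+1}`.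
Thus `G_{v(r)}(x/ȳ)` is just `Groth d (v(r))`. -/

/-- The block row containing global row `p`. -/
noncomputable def blockRowOf (r : ℕ → ℕ) (p : ℕ) : ℕ :=
  if h : ∃ j, p < rowSum r (j + 1) then Nat.find h else 0

/-- The block column (from the right) containing global column `q`. -/
noncomputable def blockColOf (n : ℕ) (r : ℕ → ℕ) (q : ℕ) : ℕ :=
  if h : ∃ i, dTot n r ≤ q + rowSum r (i + 1) then Nat.find h else 0

/-- The row variable at global row `p` after reversing each alphabet `x^j` in place. -/
noncomputable def revRow (r : ℕ → ℕ) (p : ℕ) : ℕ :=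
  rowSum r (blockRowOf r p) + (r (blockRowOf r p) - 1 - (p - rowSum r (blockRowOf r p)))

/-- The column variable at global column `q` after reversing each alphabet `y^i` in
place. -/
noncomputable def revCol (n : ℕ) (r : ℕ → ℕ) (q : ℕ) : ℕ :=
  (dTot n r - rowSum r (blockColOf n r q + 1)) +
    (r (blockColOf n r q) - 1 - (q - (dTot n r - rowSum r (blockColOf n r q + 1))))

/-- The exponential reverse monomial `(1 - x̃/ỹ)^P = ∏_{+ ∈ P} (1 - x̃_+/ỹ_+)`. -/
noncomputable def ERM (n : ℕ) (r : ℕ → ℕ) (P : PD) : GR :=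
  ∏ pq ∈ P, (1 - Zv (revRow r pq.1) * Bv (revCol n r pq.2))

/-- Set the last `ℓ` variables of every finite alphabet `x^j` and `y^i` equal to `1`. -/
noncomputable def setLastOnes (n : ℕ) (r : ℕ → ℕ) (ℓ : ℕ) : GR →ₐ[ℚ] GR :=
  MvPolynomial.aeval fun s =>
    match s with
    | Sum.inl p =>
      if ∃ j ≤ n, InBlockRow r j p ∧ rowSum r (j + 1) ≤ p + ℓ then 1 else Zv p
    | Sum.inr q =>
      if ∃ i ≤ n, InBlockCol n r i q ∧ dTot n r - rowSum r i ≤ q + ℓ then 1 else Bv q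

/-- For rank lists `big` and `small` (with `small j ≤ big j`): keep the first `small j`
letters of each alphabet of sizes `big 0, …, big n` (relabelling them as the alphabets
of sizes `small 0, …, small n`) and set all remaining letters equal to `1`. -/
noncomputable def restrictAlph (n : ℕ) (big small : ℕ → ℕ) : GR →ₐ[ℚ] GR :=
  MvPolynomial.aeval fun s =>
    match s with
    | Sum.inl p =>
      if p < dTot n big then
        if p - rowSum big (blockRowOf big p) < small (blockRowOf big p) then
          Zv (rowSum small (blockRowOf big p) + (p - rowSum big (blockRowOf big p)))
        else 1
      else Zv p
    | Sum.inr q =>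
      if q < dTot n big then
        if q - (dTot n big - rowSum big (blockColOf n big q + 1)) < small (blockColOf n big q)
        then
          Bv ((dTot n small - rowSum small (blockColOf n big q + 1)) +
            (q - (dTot n big - rowSum big (blockColOf n big q + 1))))
        else 1
      else Bv q

/-- Keep the first `k` letters of the (generic) row alphabet and the first `l` letters
of the column alphabet, setting all further letters equal to `1`. -/
noncomputable def truncAlph (k l : ℕ) : GR →ₐ[ℚ] GR :=
  MvPolynomial.aeval fun s =>
    match s with
    | Sum.inl p => if p < k then Zv p else 1
    | Sum.inr q => if q < l then Bv q else 1

/-- Substitute the generic alphabets `z, ż` by the alphabets `x^{j-1}, y^j`: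
`G(z/ż) ↦ G(x^{j-1}/y^j)`. -/
noncomputable def placeBlock (n : ℕ) (r : ℕ → ℕ) (j : ℕ) : GR →ₐ[ℚ] GR :=
  MvPolynomial.rename
    (Sum.map (fun a => rowSum r (j - 1) + a) (fun a => (dTot n r - rowSum r (j + 1)) + a))

/-- `m + v`: let the permutation act on `{m, m+1, …}` instead of `{0, 1, …}`. -/
noncomputable def shiftPerm (m : ℕ) (v : Equiv.Perm ℕ) : Equiv.Perm ℕ :=
  v.viaEmbedding ⟨fun a => m + a, add_right_injective m⟩

/-! ### Stable double Grothendieck polynomials -/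

/-- The stable double Grothendieck polynomial of a `k × l` partial permutation,
evaluated in alphabets of sizes `k'` and `l'`:
`lim_{m → ∞} G_{m+w}(z_{k'}/ż_{l'})`, the (eventually constant) limit of the double
Grothendieck polynomials of `m + w` with all variables beyond the first `k'` (resp.
`l'`) set equal to `1`. -/
noncomputable def stableTruncPP (k l k' l' : ℕ) (rel : ℕ → ℕ → Prop) : GR :=
  Classical.epsilon fun g => ∃ M, ∀ m, M ≤ m →
    truncAlph k' l' (GrothPerm (minComp (m + k) (m + l) (shiftRel m rel))) = g

/-- `Ĝ_w(z_k/ż_l)` for a `k × l` partial permutation `w`. -/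
noncomputable def stableGrothPP (k l : ℕ) (rel : ℕ → ℕ → Prop) : GR :=
  stableTruncPP k l k l rel

/-- `Ĝ_μ(z_{k'}/ż_{l'})` for a (finitely supported) permutation `μ`. -/
noncomputable def stableTruncPerm (k' l' : ℕ) (μ : Equiv.Perm ℕ) : GR :=
  Classical.epsilon fun g => ∃ M, ∀ m, M ≤ m →
    truncAlph k' l' (GrothPerm (shiftPerm m μ)) = g

/-- `Ĝ_w(x/ȳ) = Ĝ_{w_1}(x^0/y^1) ⋯ Ĝ_{w_n}(x^{n-1}/y^n)` for a lacing diagram. -/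
noncomputable def GhatLacing (n : ℕ) (r : ℕ → ℕ) (L : ℕ → ℕ → ℕ → Prop) : GR :=
  ∏ j ∈ Finset.Icc 1 n, placeBlock n r j (stableGrothPP (r (j - 1)) (r j) (L j))

/-- A (finitely supported) permutation is grassmannian if it has at most one descent. -/
def IsGrassmannian (μ : Equiv.Perm ℕ) : Prop :=
  (∃ N, ∀ i, N ≤ i → μ i = i) ∧ ∀ i i', μ (i + 1) < μ i → μ (i' + 1) < μ i' → i = i'

/-- Grassmannian lacing diagrams: those whose minimal completions are all grassmannian. -/
def GrassLacingSet (n : ℕ) (r : ℕ → ℕ) : Set (ℕ → ℕ → ℕ → Prop) :=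
  {M | IsLacingDiagram n r M ∧
    ∀ j, 1 ≤ j → j ≤ n → IsGrassmannian (minComp (r (j - 1)) (r j) (M j))}

/-! ### Pipes, top pipe dreams and absorbable elbows -/

/-- One step of a pipe through the tiling determined by `P` in a grid with `l` columns.
A state is `(i, j, fromW)`: the pipe is at tile `(i, j)`, having entered from the west
(`fromW = true`) or from the south (`fromW = false`).  At a crossing the pipe goes
straight; at an elbow it turns (west ↝ north, south ↝ east).  Pipes move only north
and east; `none` means the pipe exits the grid. -/
def nextState (l : ℕ) (P : PD) : ℕ × ℕ × Bool → Option (ℕ × ℕ × Bool) := fun s =>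
  let i := s.1
  let j := s.2.1
  let fromW := s.2.2
  if ((i, j) ∈ P ∧ fromW = true) ∨ ((i, j) ∉ P ∧ fromW = false) then
    -- exit east
    if j + 1 < l then some (i, j + 1, true) else none
  else
    -- exit north
    if 0 < i then some (i - 1, j, false) else none

/-- The (fuelled) forward trajectory of a pipe from a given state. -/
noncomputable def traj (l : ℕ) (P : PD) : ℕ → ℕ × ℕ × Bool → List (ℕ × ℕ × Bool)
  | 0, s => [s]
  | fuel + 1, s =>
    s :: (match nextState l P s with
      | none => []
      | some s' => traj l P fuel s')

/-- The pipe of `P` moving forward from state `s` passes through the tile `c`. -/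
def passesThrough (k l : ℕ) (P : PD) (s : ℕ × ℕ × Bool) (c : ℕ × ℕ) : Prop :=
  ∃ st ∈ traj l P (k + l + 2) s, (st.1, st.2.1) = c

/-- An elbow tile `e` of the pipe dream `D` (in the `k × l` grid) is absorbable if the
two pipes passing through it cross in a crossing tile (necessarily to its northeast). -/
def Absorbable (k l : ℕ) (D : PD) (e : ℕ × ℕ) : Prop :=
  e.1 < k ∧ e.2 < l ∧ e ∉ D ∧
  ∃ c ∈ D, passesThrough k l D (e.1, e.2, true) c ∧ passesThrough k l D (e.1, e.2, false) c

/-- `D` is the top pipe dream of the `k × l` partial permutation `rel`: the unique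
reduced pipe dream for `rel` having no elbow tile due north of a crossing tile. -/
def IsTopPipeDream (k l : ℕ) (rel : ℕ → ℕ → Prop) (D : PD) : Prop :=
  PipeDreamsFor k l rel D ∧ D.card = clen (minComp k l rel) ∧
  ∀ i i' j, i < i' → (i', j) ∈ D → (i, j) ∈ D

/-- `α|P`: add `α` columns of crossing tiles on the left side of the `k × l`
pipe dream `P`. -/
def addCols (k α : ℕ) (P : PD) : PD :=
  (Finset.range k ×ˢ Finset.range α) ∪ P.image fun pq => (pq.1, pq.2 + α)

/-!
Read `α|P` row by row: row `i` consists of row `i` of `P` shifted right by `α` (letters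
`i + j + α`), followed by the rectangle letters `i + α - 1, …, i`. Along the reading order the
Demazure product of `α|P` stays of the form `shiftPerm α v * ρ`, where `v` is the Demazure product
of the corresponding prefix of `P` and `ρ = rectPerm α i c` depends only on how many rectangle
tiles have been read. The permutation `ρ` fixes the positions touched by a shifted letter, so a
shifted tile changes the product exactly when the original tile does in `P`. A rectangle letter
`a` finds `w a < α ≤ w (a + 1)`, so it always raises the length and is never omitted.
-/

/-- `clen` is an `ncard`, hence junk (`0`) for permutations with infinitely many inversions;
on eventually fixed permutations it is the honest Coxeter length. -/
def EventuallyFixed (w : Equiv.Perm ℕ) : Prop := ∀ᶠ p in Filter.atTop, w p = p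

def inversions (w : Equiv.Perm ℕ) : Set (ℕ × ℕ) := {pq | pq.1 < pq.2 ∧ w pq.2 < w pq.1}

lemma clen_eq_ncard_inversions (w : Equiv.Perm ℕ) : clen w = (inversions w).ncard := rfl

namespace EventuallyFixed

lemma one : EventuallyFixed 1 := Filter.Eventually.of_forall fun _ => rfl

lemma mul {v w : Equiv.Perm ℕ} (hv : EventuallyFixed v) (hw : EventuallyFixed w) :
    EventuallyFixed (v * w) :=
  (hv.and hw).mono fun p ⟨hvp, hwp⟩ => by rw [Equiv.Perm.mul_apply, hwp, hvp]

lemma of_forall_le {w : Equiv.Perm ℕ} {N : ℕ} (h : ∀ p, N ≤ p → w p = p) : EventuallyFixed w :=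
  Filter.eventually_atTop.mpr ⟨N, h⟩

lemma finite_inversions {w : Equiv.Perm ℕ} (hw : EventuallyFixed w) :
    (inversions w).Finite := by
  obtain ⟨N, hN⟩ := Filter.eventually_atTop.mp hw
  have hlt : ∀ p < N, w p < N := fun p hp => by
    by_contra! h
    have := w.injective (hN _ h)
    omega
  refine ((Set.finite_Iio N).prod (Set.finite_Iio N)).subset ?_
  rintro ⟨p, q⟩ ⟨hpq, hinv : w q < w p⟩
  have hq : q < N := by
    by_contra! hq
    rw [hN q hq] at hinv
    rcases lt_or_ge p N with hp | hp
    · have := hlt p hp; omega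
    · rw [hN p hp] at hinv; omega
  exact ⟨lt_trans hpq hq, hq⟩

end EventuallyFixed

lemma sGen_apply (a p : ℕ) :
    sGen a p = if p = a then a + 1 else if p = a + 1 then a else p := by
  simp [sGen, Equiv.swap_apply_def]

lemma sGen_sGen (a p : ℕ) : sGen a (sGen a p) = p := Equiv.swap_apply_self _ _ _

lemma sGen_lt_sGen {a p q : ℕ} (hpq : p < q) (hne : ¬(p = a ∧ q = a + 1)) :
    sGen a p < sGen a q := by
  rw [sGen_apply, sGen_apply]
  split_ifs <;> omega

lemma eventuallyFixed_sGen (a : ℕ) : EventuallyFixed (sGen a) :=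
  .of_forall_le (N := a + 2) fun p hp => by rw [sGen_apply]; split_ifs <;> omega

lemma sGen_ne_one (a : ℕ) : sGen a ≠ 1 := by
  simp [sGen, Equiv.swap_eq_one_iff]

lemma inversions_mul_sGen {w : Equiv.Perm ℕ} {a : ℕ} (h : w a < w (a + 1)) :
    inversions (w * sGen a) =
      insert (a, a + 1) (Prod.map (sGen a) (sGen a) '' inversions w) := by
  ext ⟨p, q⟩
  simp only [inversions, Set.mem_insert_iff, Set.mem_image, Set.mem_ofPred_eq, Prod.mk.injEq,
    Prod.exists, Prod.map_apply, Equiv.Perm.mul_apply]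
  constructor
  · rintro ⟨hpq, hinv⟩
    by_cases hc : p = a ∧ q = a + 1
    · exact Or.inl hc
    · exact Or.inr ⟨sGen a p, sGen a q, ⟨sGen_lt_sGen hpq hc, hinv⟩, sGen_sGen a p, sGen_sGen a q⟩
  · rintro (⟨rfl, rfl⟩ | ⟨x, y, ⟨hxy, hinv⟩, rfl, rfl⟩)
    · simpa [sGen] using h
    · refine ⟨sGen_lt_sGen hxy (by rintro ⟨rfl, rfl⟩; omega), ?_⟩
      rwa [sGen_sGen, sGen_sGen]

lemma clen_mul_sGen_of_lt {w : Equiv.Perm ℕ} (hw : EventuallyFixed w) {a : ℕ}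
    (h : w a < w (a + 1)) : clen (w * sGen a) = clen w + 1 := by
  have hinj : Function.Injective (Prod.map (sGen a) (sGen a)) :=
    (sGen a).injective.prodMap (sGen a).injective
  have hnotMem : (a, a + 1) ∉ Prod.map (sGen a) (sGen a) '' inversions w := by
    rintro ⟨⟨x, y⟩, ⟨hxy, -⟩, he⟩
    simp only [Prod.map_apply, Prod.mk.injEq, sGen_apply] at he
    split_ifs at he <;> omega
  rw [clen_eq_ncard_inversions, clen_eq_ncard_inversions, inversions_mul_sGen h,
    Set.ncard_insert_of_notMem hnotMem (hw.finite_inversions.image _),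
    Set.ncard_image_of_injective _ hinj]

lemma clen_mul_sGen_of_gt {w : Equiv.Perm ℕ} (hw : EventuallyFixed w) {a : ℕ}
    (h : w (a + 1) < w a) : clen w = clen (w * sGen a) + 1 := by
  have h' : (w * sGen a) a < (w * sGen a) (a + 1) := by simpa [sGen] using h
  simpa [mul_assoc, sGen] using clen_mul_sGen_of_lt (hw.mul (eventuallyFixed_sGen a)) h'

lemma demStep_of_lt {w : Equiv.Perm ℕ} (hw : EventuallyFixed w) {a : ℕ}
    (h : w a < w (a + 1)) : demStep w a = w * sGen a := by
  rw [demStep, if_pos (by rw [clen_mul_sGen_of_lt hw h]; omega)]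

lemma demStep_of_gt {w : Equiv.Perm ℕ} (hw : EventuallyFixed w) {a : ℕ}
    (h : w (a + 1) < w a) : demStep w a = w := by
  rw [demStep, if_neg (by rw [clen_mul_sGen_of_gt hw h]; omega)]

lemma demStep_ne_self_of_lt {w : Equiv.Perm ℕ} (hw : EventuallyFixed w) {a : ℕ}
    (h : w a < w (a + 1)) : demStep w a ≠ w := by
  rw [demStep_of_lt hw h, Ne, mul_eq_left]
  exact sGen_ne_one a

lemma EventuallyFixed.demStep {w : Equiv.Perm ℕ} (hw : EventuallyFixed w) (a : ℕ) :
    EventuallyFixed (demStep w a) := by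
  unfold _root_.demStep
  split_ifs
  exacts [hw.mul (eventuallyFixed_sGen a), hw]

lemma shiftPerm_apply_add (m : ℕ) (v : Equiv.Perm ℕ) (p : ℕ) :
    shiftPerm m v (m + p) = m + v p :=
  Equiv.Perm.viaEmbedding_apply v _ p

lemma shiftPerm_apply_of_lt (m : ℕ) (v : Equiv.Perm ℕ) {p : ℕ} (hp : p < m) :
    shiftPerm m v p = p :=
  Equiv.Perm.viaEmbedding_apply_of_notMem v _ p fun ⟨x, hx⟩ => by
    simp only [Function.Embedding.coeFn_mk] at hx
    omega

lemma shiftPerm_mul (m : ℕ) (v w : Equiv.Perm ℕ) :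
    shiftPerm m (v * w) = shiftPerm m v * shiftPerm m w :=
  map_mul (Equiv.Perm.viaEmbeddingHom _) v w

lemma shiftPerm_one (m : ℕ) : shiftPerm m 1 = 1 :=
  map_one (Equiv.Perm.viaEmbeddingHom _)

lemma shiftPerm_injective (m : ℕ) : Function.Injective (shiftPerm m) :=
  Equiv.Perm.viaEmbeddingHom_injective _

lemma shiftPerm_sGen (m a : ℕ) : shiftPerm m (sGen a) = sGen (a + m) := by
  ext p
  rcases lt_or_ge p m with hp | hp
  · rw [shiftPerm_apply_of_lt m _ hp, sGen_apply]
    split_ifs <;> omega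
  · obtain ⟨x, rfl⟩ := Nat.exists_eq_add_of_le hp
    rw [shiftPerm_apply_add, sGen_apply, sGen_apply]
    split_ifs <;> omega

lemma EventuallyFixed.shiftPerm {v : Equiv.Perm ℕ} (hv : EventuallyFixed v) (m : ℕ) :
    EventuallyFixed (shiftPerm m v) := by
  obtain ⟨N, hN⟩ := Filter.eventually_atTop.mp hv
  refine .of_forall_le (N := m + N) fun p hp => ?_
  obtain ⟨x, rfl⟩ := Nat.exists_eq_add_of_le (le_of_add_le_left hp)
  rw [shiftPerm_apply_add, hN x (by omega)]

/-- Once rows `0, …, i-1` of `α|P` and the tiles in columns `c, …, α-1` of row `i` have been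
read, the Demazure product is `shiftPerm α v * rectPerm α i c`, with `v` the Demazure product of
the tiles of `P` read so far. Only `c ≤ α` matters; `min c α` makes the formula a bijection for
every `c`. -/
def rectPerm (α i c : ℕ) : Equiv.Perm ℕ where
  toFun p :=
    if p < i then p + α
    else if p < i + min c α then p - i
    else if p = i + min c α then i + α
    else if p ≤ i + α then p - i - 1
    else p
  invFun q :=
    if q < min c α then q + i
    else if q < α then q + i + 1
    else if q < i + α then q - α
    else if q = i + α then i + min c α
    else q
  left_inv p := by dsimp only; split_ifs <;> omega
  right_inv q := by dsimp only; split_ifs <;> omega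

lemma rectPerm_apply (α i c p : ℕ) : rectPerm α i c p =
    if p < i then p + α
    else if p < i + min c α then p - i
    else if p = i + min c α then i + α
    else if p ≤ i + α then p - i - 1
    else p := rfl

lemma rectPerm_zero_self (α : ℕ) : rectPerm α 0 α = 1 := by
  ext p; rw [rectPerm_apply]; simp only [Equiv.Perm.one_apply]; split_ifs <;> omega

lemma rectPerm_zero (α i : ℕ) : rectPerm α i 0 = rectPerm α (i + 1) α := by
  ext p; rw [rectPerm_apply, rectPerm_apply]; split_ifs <;> omega

lemma rectPerm_self_apply_of_le {α i : ℕ} (p : ℕ) (hp : i + α ≤ p) : rectPerm α i α p = p := by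
  rw [rectPerm_apply]; split_ifs <;> omega

lemma rectPerm_succ_mul_sGen {α i c : ℕ} (hc : c < α) :
    rectPerm α i (c + 1) * sGen (i + c) = rectPerm α i c := by
  ext p
  rw [Equiv.Perm.mul_apply, sGen_apply]
  split_ifs <;> rw [rectPerm_apply, rectPerm_apply] <;> split_ifs <;> omega

lemma eventuallyFixed_rectPerm (α i c : ℕ) : EventuallyFixed (rectPerm α i c) :=
  .of_forall_le (N := i + α + 1) fun p hp => by rw [rectPerm_apply]; split_ifs <;> omega

lemma demStep_shiftPerm_mul {m a : ℕ} {v ρ : Equiv.Perm ℕ} (hv : EventuallyFixed v)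
    (hρ : EventuallyFixed ρ) (h₀ : ρ (a + m) = a + m) (h₁ : ρ (a + m + 1) = a + m + 1) :
    demStep (shiftPerm m v * ρ) (a + m) = shiftPerm m (demStep v a) * ρ := by
  have hw : EventuallyFixed (shiftPerm m v * ρ) := (hv.shiftPerm m).mul hρ
  have hw₀ : (shiftPerm m v * ρ) (a + m) = m + v a := by
    rw [Equiv.Perm.mul_apply, h₀, add_comm a m, shiftPerm_apply_add]
  have hw₁ : (shiftPerm m v * ρ) (a + m + 1) = m + v (a + 1) := by
    rw [Equiv.Perm.mul_apply, h₁, show a + m + 1 = m + (a + 1) by omega, shiftPerm_apply_add]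
  have hcomm : ρ * sGen (a + m) = sGen (a + m) * ρ := by
    rw [sGen, Equiv.mul_swap_eq_swap_mul, h₀, h₁]
  rcases lt_or_gt_of_ne (v.injective.ne (show a ≠ a + 1 by omega)) with h | h
  · rw [demStep_of_lt hw (by omega), demStep_of_lt hv h, shiftPerm_mul, shiftPerm_sGen,
      mul_assoc, mul_assoc, hcomm]
  · rw [demStep_of_gt hw (by omega), demStep_of_gt hv h]

lemma shiftPerm_mul_rectPerm_lt {α i c : ℕ} (hc : c < α) (v : Equiv.Perm ℕ) :
    (shiftPerm α v * rectPerm α i (c + 1)) (i + c) <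
      (shiftPerm α v * rectPerm α i (c + 1)) (i + c + 1) := by
  have h₀ : rectPerm α i (c + 1) (i + c) = c := by rw [rectPerm_apply]; split_ifs <;> omega
  have h₁ : rectPerm α i (c + 1) (i + c + 1) = α + i := by
    rw [rectPerm_apply]; split_ifs <;> omega
  rw [Equiv.Perm.mul_apply, Equiv.Perm.mul_apply, h₀, h₁, shiftPerm_apply_of_lt α v hc,
    shiftPerm_apply_add]
  omega

def tileStep (w : Equiv.Perm ℕ) (pq : ℕ × ℕ) : Equiv.Perm ℕ := demStep w (pq.1 + pq.2)

lemma EventuallyFixed.foldl_tileStep {w : Equiv.Perm ℕ} (hw : EventuallyFixed w)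
    (L : List (ℕ × ℕ)) : EventuallyFixed (L.foldl tileStep w) := by
  induction L generalizing w with
  | nil => exact hw
  | cons a L ih => exact ih (hw.demStep _)

def KeptAlong : Equiv.Perm ℕ → List (ℕ × ℕ) → ℕ × ℕ → Prop
  | _, [], _ => True
  | w, a :: L, x => (a = x → tileStep w a ≠ w) ∧ KeptAlong (tileStep w a) L x

lemma keptAlong_iff (w : Equiv.Perm ℕ) (L : List (ℕ × ℕ)) (x : ℕ × ℕ) :
    KeptAlong w L x ↔ ∀ t, L[t]? = some x →
      (L.take (t + 1)).foldl tileStep w ≠ (L.take t).foldl tileStep w := by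
  induction L generalizing w with
  | nil => simp [KeptAlong]
  | cons a L ih =>
    rw [KeptAlong, ih]
    constructor
    · rintro ⟨hhead, htail⟩ (_ | t) ht
      · simpa using hhead (by simpa using ht)
      · simpa using htail t (by simpa using ht)
    · intro h
      exact ⟨fun hax => by simpa using h 0 (by simp [hax]),
        fun t ht => by simpa using h (t + 1) (by simpa using ht)⟩

lemma keptAlong_append (w : Equiv.Perm ℕ) (L₁ L₂ : List (ℕ × ℕ)) (x : ℕ × ℕ) :
    KeptAlong w (L₁ ++ L₂) x ↔ KeptAlong w L₁ x ∧ KeptAlong (L₁.foldl tileStep w) L₂ x := by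
  induction L₁ generalizing w with
  | nil => simp [KeptAlong]
  | cons a L ih => simp only [List.cons_append, KeptAlong, ih, List.foldl_cons, and_assoc]

lemma keptAlong_of_notMem {w : Equiv.Perm ℕ} {L : List (ℕ × ℕ)} {x : ℕ × ℕ} (hx : x ∉ L) :
    KeptAlong w L x := by
  induction L generalizing w with
  | nil => trivial
  | cons a L ih =>
    rw [List.mem_cons, not_or] at hx
    exact ⟨fun h => absurd h.symm hx.1, ih hx.2⟩

lemma simplification_eq_filter (k l : ℕ) (P : PD) :
    simplification k l P = P.filter (KeptAlong 1 (posList k l P)) := by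
  have hprefix : ∀ t, demWord ((pdWord k l P).take t) = ((posList k l P).take t).foldl tileStep 1 :=
    fun t => by rw [pdWord, ← List.map_take, demWord, List.foldl_map]; rfl
  ext x
  simp only [simplification, Finset.mem_filter, keptAlong_iff, hprefix]

def shiftTile (α : ℕ) (pq : ℕ × ℕ) : ℕ × ℕ := (pq.1, pq.2 + α)

lemma shiftTile_injective (α : ℕ) : Function.Injective (shiftTile α) := by
  rintro ⟨a, b⟩ ⟨c, d⟩ h
  simp only [shiftTile, Prod.mk.injEq, Nat.add_right_cancel_iff] at h
  rw [h.1, h.2]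

def rectRow (i c : ℕ) : List (ℕ × ℕ) := (List.range c).reverse.map fun j => (i, j)

lemma rectRow_succ (i c : ℕ) : rectRow i (c + 1) = (i, c) :: rectRow i c := by
  simp [rectRow, List.range_succ]

lemma foldl_rectRow_and_keptAlong {α i c : ℕ} (hc : c ≤ α) {v : Equiv.Perm ℕ}
    (hv : EventuallyFixed v) :
    (rectRow i c).foldl tileStep (shiftPerm α v * rectPerm α i c) =
        shiftPerm α v * rectPerm α i 0 ∧
      ∀ x, KeptAlong (shiftPerm α v * rectPerm α i c) (rectRow i c) x := by
  induction c with
  | zero => exact ⟨rfl, fun _ => trivial⟩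
  | succ c ih =>
    have hlt := shiftPerm_mul_rectPerm_lt (i := i) (by omega : c < α) v
    have hw := (hv.shiftPerm α).mul (eventuallyFixed_rectPerm α i (c + 1))
    have hstep : tileStep (shiftPerm α v * rectPerm α i (c + 1)) (i, c) =
        shiftPerm α v * rectPerm α i c := by
      rw [tileStep, demStep_of_lt hw hlt, mul_assoc, rectPerm_succ_mul_sGen (by omega)]
    obtain ⟨hfold, hkept⟩ := ih (by omega)
    rw [rectRow_succ, List.foldl_cons, hstep]
    refine ⟨hfold, fun x => ⟨fun _ => demStep_ne_self_of_lt hw hlt, ?_⟩⟩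
    rw [hstep]
    exact hkept x

lemma foldl_map_shiftTile_and_keptAlong {α i : ℕ} {ρ : Equiv.Perm ℕ}
    (hρ : ∀ p, i + α ≤ p → ρ p = p) {L : List (ℕ × ℕ)} (hL : ∀ pq ∈ L, i ≤ pq.1)
    {v : Equiv.Perm ℕ} (hv : EventuallyFixed v) :
    (L.map (shiftTile α)).foldl tileStep (shiftPerm α v * ρ) =
        shiftPerm α (L.foldl tileStep v) * ρ ∧
      ∀ y, KeptAlong (shiftPerm α v * ρ) (L.map (shiftTile α)) (shiftTile α y) ↔
        KeptAlong v L y := by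
  induction L generalizing v with
  | nil => exact ⟨rfl, fun _ => Iff.rfl⟩
  | cons a L ih =>
    have ha := hL a List.mem_cons_self
    have hstep : tileStep (shiftPerm α v * ρ) (shiftTile α a) =
        shiftPerm α (tileStep v a) * ρ := by
      rw [tileStep, tileStep, shiftTile, ← add_assoc]
      exact demStep_shiftPerm_mul hv (.of_forall_le hρ) (hρ _ (by omega)) (hρ _ (by omega))
    obtain ⟨hfold, hkept⟩ :=
      ih (fun pq hpq => hL pq (List.mem_cons_of_mem a hpq)) (hv.demStep (a.1 + a.2))
    simp only [List.map_cons, List.foldl_cons, KeptAlong, hstep]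
    refine ⟨hfold, fun y => and_congr ?_ (hkept y)⟩
    rw [(shiftTile_injective α).eq_iff, Ne, mul_left_inj, (shiftPerm_injective α).eq_iff]

def paddedRow (α : ℕ) (rows : ℕ → List (ℕ × ℕ)) (i : ℕ) : List (ℕ × ℕ) :=
  (rows i).map (shiftTile α) ++ rectRow i α

lemma flatMap_range_succ {β : Type*} (f : ℕ → List β) (i : ℕ) :
    (List.range (i + 1)).flatMap f = (List.range i).flatMap f ++ f i := by
  rw [List.range_succ, List.flatMap_append, List.flatMap_singleton]

lemma foldl_flatMap_paddedRow {α : ℕ} {rows : ℕ → List (ℕ × ℕ)}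
    (hrows : ∀ i, ∀ pq ∈ rows i, i ≤ pq.1) (i : ℕ) :
    ((List.range i).flatMap (paddedRow α rows)).foldl tileStep 1 =
      shiftPerm α (((List.range i).flatMap rows).foldl tileStep 1) * rectPerm α i α := by
  induction i with
  | zero => simp [rectPerm_zero_self, shiftPerm_one]
  | succ i ih =>
    have hv := EventuallyFixed.one.foldl_tileStep ((List.range i).flatMap rows)
    rw [flatMap_range_succ, flatMap_range_succ, List.foldl_append, List.foldl_append, ih,
      paddedRow, List.foldl_append,
      (foldl_map_shiftTile_and_keptAlong rectPerm_self_apply_of_le (hrows i) hv).1,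
      (foldl_rectRow_and_keptAlong le_rfl (hv.foldl_tileStep _)).1, rectPerm_zero]

lemma keptAlong_flatMap_paddedRow {α : ℕ} {rows : ℕ → List (ℕ × ℕ)}
    (hrows : ∀ i, ∀ pq ∈ rows i, i ≤ pq.1) (i : ℕ) :
    (∀ y, KeptAlong 1 ((List.range i).flatMap (paddedRow α rows)) (shiftTile α y) ↔
        KeptAlong 1 ((List.range i).flatMap rows) y) ∧
      ∀ r c, c < α → KeptAlong 1 ((List.range i).flatMap (paddedRow α rows)) (r, c) := by
  induction i with
  | zero => exact ⟨fun _ => Iff.rfl, fun _ _ _ => trivial⟩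
  | succ i ih =>
    have hv := EventuallyFixed.one.foldl_tileStep ((List.range i).flatMap rows)
    obtain ⟨hfold, hshift⟩ :=
      foldl_map_shiftTile_and_keptAlong (α := α) rectPerm_self_apply_of_le (hrows i) hv
    have hrect :=
      (foldl_rectRow_and_keptAlong (α := α) (i := i) le_rfl (hv.foldl_tileStep (rows i))).2
    simp only [flatMap_range_succ, keptAlong_append, foldl_flatMap_paddedRow hrows, paddedRow,
      hfold, hshift, hrect, and_true]
    refine ⟨fun y => and_congr_left' (ih.1 y), fun r c hc => ⟨ih.2 r c hc, ?_⟩⟩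
    refine keptAlong_of_notMem fun hmem => ?_
    obtain ⟨pq, -, hpq⟩ := List.mem_map.mp hmem
    have := congrArg Prod.snd hpq
    simp only [shiftTile] at this
    omega

def rowOf (l : ℕ) (P : PD) (i : ℕ) : List (ℕ × ℕ) :=
  ((List.range l).reverse).filterMap fun j => if (i, j) ∈ P then some (i, j) else none

lemma posList_eq_flatMap_rowOf (k l : ℕ) (P : PD) :
    posList k l P = (List.range k).flatMap (rowOf l P) := rfl

lemma fst_eq_of_mem_rowOf {l i : ℕ} {P : PD} {pq : ℕ × ℕ} (h : pq ∈ rowOf l P i) : pq.1 = i := by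
  obtain ⟨j, -, hj⟩ := List.mem_filterMap.mp h
  split_ifs at hj
  cases hj
  rfl

lemma mem_addCols_add {k α : ℕ} {P : PD} (i j : ℕ) :
    (i, j + α) ∈ addCols k α P ↔ (i, j) ∈ P := by
  simp [addCols, Finset.mem_union, Finset.mem_product, Finset.mem_image]

lemma mem_addCols_of_lt {k α : ℕ} {P : PD} {i j : ℕ} (hj : j < α) :
    (i, j) ∈ addCols k α P ↔ i < k := by
  simp only [addCols, Finset.mem_union, Finset.mem_product, Finset.mem_range, Finset.mem_image,
    Prod.mk.injEq]
  constructor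
  · rintro (h | ⟨pq, -, -, h⟩)
    exacts [h.1, by omega]
  · exact fun hi => .inl ⟨hi, hj⟩

lemma addCols_injective (k α : ℕ) : Function.Injective (addCols k α) := by
  intro D D' h
  ext ⟨i, j⟩
  rw [← mem_addCols_add (k := k) (α := α) i j, h, mem_addCols_add]

lemma rowOf_addCols {k α : ℕ} (l : ℕ) (P : PD) {i : ℕ} (hi : i < k) :
    rowOf (l + α) (addCols k α P) i = paddedRow α (rowOf l P) i := by
  rw [rowOf, paddedRow, add_comm l α, List.range_add, List.reverse_append, List.filterMap_append]
  congr 1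
  · rw [← List.map_reverse, List.filterMap_map, rowOf, List.map_filterMap]
    refine List.filterMap_congr fun j _ => ?_
    simp only [Function.comp_apply, add_comm α j, mem_addCols_add]
    split_ifs <;> rfl
  · rw [rectRow, ← List.filterMap_eq_map]
    refine List.filterMap_congr fun j hj => ?_
    rw [List.mem_reverse, List.mem_range] at hj
    rw [if_pos ((mem_addCols_of_lt hj).mpr hi)]
    rfl

lemma posList_addCols (k l α : ℕ) (P : PD) :
    posList k (l + α) (addCols k α P) = (List.range k).flatMap (paddedRow α (rowOf l P)) :=
  List.flatMap_congr fun _ hi => rowOf_addCols l P (List.mem_range.mp hi)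

lemma simplification_addCols (k l α : ℕ) (P : PD) :
    simplification k (l + α) (addCols k α P) = addCols k α (simplification k l P) := by
  obtain ⟨hshift, hrect⟩ := keptAlong_flatMap_paddedRow (α := α) (rows := rowOf l P)
    (fun _ _ hpq => (fst_eq_of_mem_rowOf hpq).ge) k
  rw [← posList_addCols] at hshift hrect
  rw [simplification_eq_filter, simplification_eq_filter]
  ext ⟨i, j⟩
  rw [Finset.mem_filter]
  rcases lt_or_ge j α with hj | hj
  · rw [mem_addCols_of_lt hj, mem_addCols_of_lt hj]
    exact and_iff_left (hrect i j hj)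
  · obtain ⟨j, rfl⟩ := Nat.exists_eq_add_of_le' hj
    rw [mem_addCols_add, mem_addCols_add, Finset.mem_filter]
    exact and_congr_right' (hshift (i, j))

theorem stmt4_general (k l α : ℕ) (P D : PD) :
    simplification k l P = D ↔
      simplification k (l + α) (addCols k α P) = addCols k α D := by
  rw [simplification_addCols]
  exact (addCols_injective k α).eq_iff.symm

/-- **Lemma (simplification is stable under adding full columns on the left).**
Let `P` be a `k × l` pipe dream and let `α|P` be the `k × (l + α)` pipe dream obtained
by adding `α` columns of `k` crossing tiles on the left side of `P`.  Then `P`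
simplifies to `D` if and only if `α|P` simplifies to `α|D`. -/
theorem stmt4 (k l α : ℕ) (P D : PD) (hP : InGrid k l P) :
    simplification k l P = D ↔
      simplification k (l + α) (addCols k α P) = addCols k α D :=
  stmt4_general k l α P D

end
end

section
/- For every rank array r and nonnegative integer m, the stable double quiver K-polynomial satisfies the stability property G_{m+r}(x_r/ȳ_r) = G_r(x/ȳ), i.e., setting all variables beyond the first r_j letters of each alphabet equal to 1 in G_{m+r} recovers G_r. -/
open scoped Classical

noncomputable section

/-! ### Auxiliary lemmas for stability -/

lemma rowSum_mono (ρ : ℕ → ℕ) : Monotone (rowSum ρ) := fun _ _ h =>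
  Finset.sum_le_sum_of_subset (Finset.range_subset_range.2 h)

lemma rowSum_succ' (ρ : ℕ → ℕ) (j : ℕ) : rowSum ρ (j + 1) = rowSum ρ j + ρ j :=
  Finset.sum_range_succ _ _

lemma rowSum_le_rowSum {a b : ℕ → ℕ} (h : ∀ j, a j ≤ b j) (k : ℕ) :
    rowSum a k ≤ rowSum b k :=
  Finset.sum_le_sum fun j _ => h j

lemma dTot_mono (n : ℕ) {a b : ℕ → ℕ} (h : ∀ j, a j ≤ b j) : dTot n a ≤ dTot n b :=
  rowSum_le_rowSum h (n + 1)

lemma blockRowOf_spec (ρ : ℕ → ℕ) (j q : ℕ) (h1 : rowSum ρ j ≤ q)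
    (h2 : q < rowSum ρ (j + 1)) : blockRowOf ρ q = j := by
  have hex : ∃ j', q < rowSum ρ (j' + 1) := ⟨j, h2⟩
  rw [blockRowOf, dif_pos hex]
  refine le_antisymm (Nat.find_le h2) ?_
  by_contra hlt
  push_neg at hlt
  have hsp := Nat.find_spec hex
  have : rowSum ρ (Nat.find hex + 1) ≤ rowSum ρ j := rowSum_mono ρ (by omega)
  omega

lemma blockRowOf_lt (n : ℕ) (ρ : ℕ → ℕ) (p : ℕ) (hp : p < dTot n ρ) :
    blockRowOf ρ p ≤ n ∧ rowSum ρ (blockRowOf ρ p) ≤ p ∧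
      p < rowSum ρ (blockRowOf ρ p + 1) := by
  have hw : p < rowSum ρ (n + 1) := hp
  have hex : ∃ j', p < rowSum ρ (j' + 1) := ⟨n, hw⟩
  rw [blockRowOf, dif_pos hex]
  refine ⟨Nat.find_le hw, ?_, Nat.find_spec hex⟩
  rcases Nat.eq_zero_or_pos (Nat.find hex) with h0 | h0
  · rw [h0]; simp [rowSum]
  · have hm := Nat.find_min hex (Nat.sub_lt h0 one_pos)
    push_neg at hm
    have heq : Nat.find hex - 1 + 1 = Nat.find hex := by omega
    rwa [heq] at hm

lemma blockColOf_spec (n : ℕ) (ρ : ℕ → ℕ) (i q : ℕ)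
    (h1 : dTot n ρ ≤ q + rowSum ρ (i + 1)) (h2 : q + rowSum ρ i < dTot n ρ) :
    blockColOf n ρ q = i := by
  have hex : ∃ i', dTot n ρ ≤ q + rowSum ρ (i' + 1) := ⟨i, h1⟩
  rw [blockColOf, dif_pos hex]
  refine le_antisymm (Nat.find_le h1) ?_
  by_contra hlt
  push_neg at hlt
  have hsp := Nat.find_spec hex
  have : rowSum ρ (Nat.find hex + 1) ≤ rowSum ρ i := rowSum_mono ρ (by omega)
  omega

lemma blockColOf_lt (n : ℕ) (ρ : ℕ → ℕ) (q : ℕ) (hq : q < dTot n ρ) :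
    blockColOf n ρ q ≤ n ∧ dTot n ρ ≤ q + rowSum ρ (blockColOf n ρ q + 1) ∧
      q + rowSum ρ (blockColOf n ρ q) < dTot n ρ := by
  have hw : dTot n ρ ≤ q + rowSum ρ (n + 1) := Nat.le_add_left _ _
  have hex : ∃ i', dTot n ρ ≤ q + rowSum ρ (i' + 1) := ⟨n, hw⟩
  rw [blockColOf, dif_pos hex]
  refine ⟨Nat.find_le hw, Nat.find_spec hex, ?_⟩
  rcases Nat.eq_zero_or_pos (Nat.find hex) with h0 | h0
  · rw [h0]; simpa [rowSum] using hq
  · have hm := Nat.find_min hex (Nat.sub_lt h0 one_pos)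
    push_neg at hm
    have heq : Nat.find hex - 1 + 1 = Nat.find hex := by omega
    rw [heq] at hm
    omega

lemma restrictAlph_comp (n : ℕ) (big mid small : ℕ → ℕ)
    (h1 : ∀ j, small j ≤ mid j) (h2 : ∀ j, mid j ≤ big j) (f : GR) :
    restrictAlph n mid small (restrictAlph n big mid f) =
      restrictAlph n big small f := by
  have hdt : dTot n mid ≤ dTot n big := dTot_mono n h2
  have key : ∀ s, restrictAlph n mid small (restrictAlph n big mid (MvPolynomial.X s)) =
      restrictAlph n big small (MvPolynomial.X s) := by
    intro s
    cases s with
    | inl p =>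
      simp only [restrictAlph, MvPolynomial.aeval_X]
      by_cases hpb : p < dTot n big
      · obtain ⟨hjn, hlo, hhi⟩ := blockRowOf_lt n big p hpb
        set j := blockRowOf big p with hj
        rw [if_pos hpb, if_pos hpb]
        by_cases hoff : p - rowSum big j < mid j
        · rw [if_pos hoff]
          set q := rowSum mid j + (p - rowSum big j) with hqdef
          have hq1 : rowSum mid j ≤ q := Nat.le_add_right _ _
          have hq2 : q < rowSum mid (j + 1) := by
            rw [rowSum_succ']; omega
          have hqd : q < dTot n mid :=
            lt_of_lt_of_le hq2 (rowSum_mono mid (by omega))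
          have hbr : blockRowOf mid q = j := blockRowOf_spec mid j q hq1 hq2
          simp only [Zv, MvPolynomial.aeval_X]
          rw [if_pos hqd, hbr]
          have hoff' : q - rowSum mid j = p - rowSum big j := by omega
          rw [hoff']
        · rw [if_neg hoff, map_one, if_neg (by have := h1 j; omega)]
      · rw [if_neg hpb, if_neg hpb]
        simp only [Zv, MvPolynomial.aeval_X]
        rw [if_neg (by omega)]
    | inr q0 =>
      simp only [restrictAlph, MvPolynomial.aeval_X]
      by_cases hqb : q0 < dTot n big
      · obtain ⟨hin, hlo, hhi⟩ := blockColOf_lt n big q0 hqb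
        set i := blockColOf n big q0 with hi
        rw [if_pos hqb, if_pos hqb]
        have hsb : rowSum big (i + 1) = rowSum big i + big i := rowSum_succ' _ _
        have hsm : rowSum mid (i + 1) = rowSum mid i + mid i := rowSum_succ' _ _
        have hm1 : rowSum mid (i + 1) ≤ dTot n mid := rowSum_mono mid (by omega)
        by_cases hoff : q0 - (dTot n big - rowSum big (i + 1)) < mid i
        · rw [if_pos hoff]
          set q' := (dTot n mid - rowSum mid (i + 1)) +
            (q0 - (dTot n big - rowSum big (i + 1))) with hq'def
          have hc1 : dTot n mid ≤ q' + rowSum mid (i + 1) := by omega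
          have hc2 : q' + rowSum mid i < dTot n mid := by omega
          have hq'd : q' < dTot n mid := by omega
          have hbc : blockColOf n mid q' = i := blockColOf_spec n mid i q' hc1 hc2
          simp only [Bv, MvPolynomial.aeval_X]
          rw [if_pos hq'd, hbc]
          have hoff' : q' - (dTot n mid - rowSum mid (i + 1)) =
              q0 - (dTot n big - rowSum big (i + 1)) := by omega
          rw [hoff']
        · rw [if_neg hoff, map_one, if_neg (by have := h1 i; omega)]
      · rw [if_neg hqb, if_neg hqb]
        simp only [Bv, MvPolynomial.aeval_X]
        rw [if_neg (by omega)]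
  induction f using MvPolynomial.induction_on with
  | C a => simp
  | add p q hp hq => simp only [map_add, hp, hq]
  | mul_X p s hp => rw [map_mul, map_mul, hp, map_mul, key]

/-- **Stability of the stable double quiver `K`-polynomial.**
For every rank array `r` and nonnegative integer `m`:
`G_{m+r}(x_r/ȳ_r) = G_r(x/ȳ)`, i.e. setting all variables beyond the first `r j`
letters of each alphabet equal to `1` in the stable double quiver `K`-polynomial
`G_{m+r}` recovers `G_r`.  Here `Gr` and `Gmr` are the stable (eventually constant)
limits of the restricted quiver `K`-polynomials for ranks `r` and `m + r`. -/
theorem stmt12 (n : ℕ) (r : ℕ → ℕ) (v vH : Equiv.Perm ℕ)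
    (hv : IsZelevinsky n r v) (hH : IsHomZel n r vH)
    (vm vmH : ℕ → Equiv.Perm ℕ)
    (hvm : ∀ m, IsShiftedZel n r v m (vm m))
    (hvmH : ∀ m, IsHomZel n (fun j => m + r j) (vmH m))
    (Q : ℕ → GR)
    (hQ : ∀ m, Groth (dTot n fun j => m + r j) (vm m) =
      Groth (dTot n fun j => m + r j) (vmH m) * Q m)
    (m : ℕ) (Gr Gmr : GR)
    (hGr : ∃ M, ∀ m', M ≤ m' → restrictAlph n (fun j => m' + r j) r (Q m') = Gr)
    (hGmr : ∃ M, ∀ m', M ≤ m' →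
      restrictAlph n (fun j => m' + m + r j) (fun j => m + r j) (Q (m' + m)) = Gmr) :
    restrictAlph n (fun j => m + r j) r Gmr = Gr := by
  obtain ⟨M1, h1⟩ := hGr
  obtain ⟨M2, h2⟩ := hGmr
  have e2 := h2 (max M1 M2) (le_max_right _ _)
  have e1 := h1 (max M1 M2 + m) (le_trans (le_max_left _ _) (Nat.le_add_right _ _))
  rw [← e2,
    restrictAlph_comp n (fun j => max M1 M2 + m + r j) (fun j => m + r j) r
      (fun j => Nat.le_add_left _ _)
      (fun j => by show m + r j ≤ max M1 M2 + m + r j; omega), e1]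

end
end

section
/- A pipe dream P simplifies to a reduced pipe dream D if and only if P is obtained from D by changing some (possibly empty) set of absorbable elbow tiles of D into crossing tiles. -/
open scoped Classical

noncomputable section

/-!
Read the word of `P` letter by letter. As long as every letter outside `D` leaves the
Demazure product unchanged, the Demazure product of a prefix of the word of `P` is that of the
letters of `D` in it, so `P` simplifies to `D` exactly when every tile `e ∈ P \ D` is absorbed:
if `Q` is the (reduced) set of crossings of `D` read before `e`, then `δ(Q)` has a descent at
the antidiagonal `e.1 + e.2`. No crossing of `Q` is read after `e`, so the pipes of `Q` entering
with indices `e.1 + e.2` and `e.1 + e.2 + 1` zigzag through elbows into `e` from the west and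
from the south, and from there on they are the two pipes of `D` through `e`. In a reduced pipe
dream two pipes cross iff the Demazure product inverts them (erasing the last crossing swaps two
adjacent pipes), so the descent exists iff the two pipes through `e` cross, i.e. iff `e` is
absorbable.
-/

namespace PipeDream

open Relation

section Demazure

variable {w : Equiv.Perm ℕ}

def inversions (w : Equiv.Perm ℕ) : Set (ℕ × ℕ) := {pq | pq.1 < pq.2 ∧ w pq.2 < w pq.1}

theorem inversions_one : inversions 1 = ∅ := by
  ext ⟨p, q⟩
  simp [inversions]
  omega

theorem clen_one : clen 1 = 0 := by
  rw [clen, ← inversions, inversions_one, Set.ncard_empty]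

theorem sGen_apply (i x : ℕ) :
    sGen i x = if x = i then i + 1 else if x = i + 1 then i else x := by
  simp [sGen, Equiv.swap_apply_def]

theorem sGen_lt_sGen {i a b : ℕ} (hab : a < b) (h : ¬(a = i ∧ b = i + 1)) :
    sGen i a < sGen i b := by
  simp only [sGen_apply]; split_ifs <;> omega

theorem mul_sGen_mul_sGen (w : Equiv.Perm ℕ) (i : ℕ) : w * sGen i * sGen i = w := by
  rw [mul_assoc, sGen, Equiv.swap_mul_self, mul_one]

theorem mul_sGen_apply_lt_iff {i : ℕ} :
    (w * sGen i) i < (w * sGen i) (i + 1) ↔ w (i + 1) < w i := by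
  simp [sGen_apply]

theorem apply_lt_or_gt (w : Equiv.Perm ℕ) (i : ℕ) : w i < w (i + 1) ∨ w (i + 1) < w i :=
  lt_or_gt_of_ne (w.injective.ne (Nat.succ_ne_self i).symm)

theorem bijective_prodMap_sGen (i : ℕ) : (Prod.map (sGen i) (sGen i)).Bijective :=
  ((sGen i).prodCongr (sGen i)).bijective

theorem inversions_mul_sGen {i : ℕ} (h : w i < w (i + 1)) :
    inversions (w * sGen i) =
      insert (i, i + 1) (Prod.map (sGen i) (sGen i) ⁻¹' inversions w) := by
  ext ⟨p, q⟩
  simp only [inversions, Set.mem_insert_iff, Set.mem_preimage, Set.mem_ofPred_eq,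
    Prod.map_apply, Prod.mk.injEq, Equiv.Perm.mul_apply, sGen_apply]
  split_ifs <;> grind

theorem not_mem_preimage_inversions {i : ℕ} :
    (i, i + 1) ∉ Prod.map (sGen i) (sGen i) ⁻¹' inversions w := by
  simp [inversions, sGen_apply]

theorem clen_mul_sGen_of_lt (hw : (inversions w).Finite) {i : ℕ} (h : w i < w (i + 1)) :
    clen (w * sGen i) = clen w + 1 := by
  have hinj := (bijective_prodMap_sGen i).injective
  rw [clen, ← inversions, inversions_mul_sGen h,
    Set.ncard_insert_of_notMem not_mem_preimage_inversions (hw.preimage hinj.injOn),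
    Set.ncard_preimage_of_injective_subset_range hinj
      (by simp [(bijective_prodMap_sGen i).surjective.range_eq])]
  rfl

theorem finite_inversions_mul_sGen (hw : (inversions w).Finite) (i : ℕ) :
    (inversions (w * sGen i)).Finite := by
  rcases apply_lt_or_gt w i with h | h
  · rw [inversions_mul_sGen h]
    exact (hw.preimage (bijective_prodMap_sGen i).injective.injOn).insert _
  · have hw' := inversions_mul_sGen (mul_sGen_apply_lt_iff.mpr h)
    rw [mul_sGen_mul_sGen] at hw'
    rw [hw'] at hw
    exact (hw.subset (Set.subset_insert _ _)).of_preimage (bijective_prodMap_sGen i).surjective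

theorem clen_mul_sGen_of_gt (hw : (inversions w).Finite) {i : ℕ} (h : w (i + 1) < w i) :
    clen (w * sGen i) + 1 = clen w := by
  rw [← clen_mul_sGen_of_lt (finite_inversions_mul_sGen hw i) (mul_sGen_apply_lt_iff.mpr h),
    mul_sGen_mul_sGen]

theorem demStep_of_lt (hw : (inversions w).Finite) {i : ℕ} (h : w i < w (i + 1)) :
    demStep w i = w * sGen i := by
  rw [demStep, if_pos (by rw [clen_mul_sGen_of_lt hw h]; omega)]

theorem demStep_of_gt (hw : (inversions w).Finite) {i : ℕ} (h : w (i + 1) < w i) :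
    demStep w i = w := by
  rw [demStep, if_neg (by have := clen_mul_sGen_of_gt hw h; omega)]

theorem demStep_eq_self_iff (hw : (inversions w).Finite) {i : ℕ} :
    demStep w i = w ↔ w (i + 1) < w i := by
  refine ⟨fun h => ?_, demStep_of_gt hw⟩
  refine (apply_lt_or_gt w i).resolve_left fun hlt => ?_
  have := clen_mul_sGen_of_lt hw hlt
  rw [← demStep_of_lt hw hlt, h] at this
  omega

theorem finite_inversions_demStep (hw : (inversions w).Finite) (i : ℕ) :
    (inversions (demStep w i)).Finite := by
  unfold demStep
  split_ifs
  exacts [finite_inversions_mul_sGen hw i, hw]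

theorem clen_demStep_le (hw : (inversions w).Finite) (i : ℕ) :
    clen (demStep w i) ≤ clen w + 1 := by
  rcases apply_lt_or_gt w i with h | h
  · rw [demStep_of_lt hw h, clen_mul_sGen_of_lt hw h]
  · rw [demStep_of_gt hw h]; omega

theorem finite_inversions_foldl_demStep (hw : (inversions w).Finite) (ws : List ℕ) :
    (inversions (ws.foldl demStep w)).Finite := by
  induction ws generalizing w with
  | nil => exact hw
  | cons a ws ih => exact ih (finite_inversions_demStep hw a)

theorem clen_foldl_demStep_le (hw : (inversions w).Finite) (ws : List ℕ) :
    clen (ws.foldl demStep w) ≤ clen w + ws.length := by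
  induction ws generalizing w with
  | nil => simp
  | cons a ws ih =>
    have := ih (finite_inversions_demStep hw a)
    have := clen_demStep_le hw a
    simp only [List.foldl_cons, List.length_cons]
    omega

theorem demWord_append (xs ys : List ℕ) :
    demWord (xs ++ ys) = ys.foldl demStep (demWord xs) :=
  List.foldl_append

theorem demWord_concat (xs : List ℕ) (a : ℕ) :
    demWord (xs ++ [a]) = demStep (demWord xs) a :=
  demWord_append xs [a]

theorem finite_inversions_demWord (ws : List ℕ) : (inversions (demWord ws)).Finite :=
  finite_inversions_foldl_demStep (by simp [inversions_one]) ws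

theorem clen_demWord_le (ws : List ℕ) : clen (demWord ws) ≤ ws.length := by
  have h : clen (demWord ws) ≤ clen 1 + ws.length :=
    clen_foldl_demStep_le (by simp [inversions_one]) ws
  rwa [clen_one, zero_add] at h

theorem clen_demWord_take {ws : List ℕ} (h : clen (demWord ws) = ws.length) (t : ℕ) :
    clen (demWord (ws.take t)) = (ws.take t).length := by
  have hle := clen_foldl_demStep_le (finite_inversions_demWord (ws.take t)) (ws.drop t)
  rw [← demWord_append, List.take_append_drop, h, List.length_drop] at hle
  have := clen_demWord_le (ws.take t)
  rw [List.length_take] at *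
  omega

theorem demWord_concat_of_clen_eq {ws : List ℕ} {a : ℕ}
    (h : clen (demWord (ws ++ [a])) = ws.length + 1) :
    clen (demWord ws) = ws.length ∧ demWord ws a < demWord ws (a + 1) ∧
      demWord (ws ++ [a]) = demWord ws * sGen a := by
  have hw := finite_inversions_demWord ws
  have := clen_demWord_le ws
  rw [demWord_concat] at h ⊢
  rcases apply_lt_or_gt (demWord ws) a with hlt | hgt
  · rw [demStep_of_lt hw hlt, clen_mul_sGen_of_lt hw hlt] at h
    exact ⟨by omega, hlt, demStep_of_lt hw hlt⟩
  · rw [demStep_of_gt hw hgt] at h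
    omega

end Demazure

section ReadingOrder

variable {k l : ℕ}

def ReadsBefore (x y : ℕ × ℕ) : Prop := x.1 < y.1 ∨ (x.1 = y.1 ∧ y.2 < x.2)

instance : Std.Irrefl ReadsBefore := ⟨fun _ => by simp [ReadsBefore]⟩

instance : Std.Antisymm ReadsBefore := ⟨fun _ _ h h' => by unfold ReadsBefore at *; omega⟩

theorem ReadsBefore.asymm {x y : ℕ × ℕ} (h : ReadsBefore x y) : ¬ ReadsBefore y x := by
  unfold ReadsBefore at *; omega

theorem ReadsBefore.not_le {x y : ℕ × ℕ} (h : ReadsBefore x y) :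
    ¬ (y.1 ≤ x.1 ∧ x.2 ≤ y.2) := by
  unfold ReadsBefore at h; omega

theorem readsBefore_of_le {x y : ℕ × ℕ} (h1 : x.1 ≤ y.1) (h2 : y.2 ≤ x.2) (hne : x ≠ y) :
    ReadsBefore x y := by
  unfold ReadsBefore
  by_contra h
  exact hne (Prod.ext (by omega) (by omega))

theorem readsBefore_of_not_readsBefore {x y : ℕ × ℕ} (hne : x ≠ y) (h : ¬ ReadsBefore y x) :
    ReadsBefore x y := by
  unfold ReadsBefore at *
  by_contra h'
  exact hne (Prod.ext (by omega) (by omega))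

def gridList (k l : ℕ) : List (ℕ × ℕ) :=
  (List.range k).flatMap fun i => (List.range l).reverse.map fun j => (i, j)

theorem mem_gridList {x : ℕ × ℕ} : x ∈ gridList k l ↔ x.1 < k ∧ x.2 < l := by
  simp only [gridList, List.mem_flatMap, List.mem_map, List.mem_reverse, List.mem_range]
  exact ⟨by rintro ⟨i, hi, j, hj, rfl⟩; exact ⟨hi, hj⟩, fun h => ⟨x.1, h.1, x.2, h.2, rfl⟩⟩

theorem pairwise_gridList (k l : ℕ) : (gridList k l).Pairwise ReadsBefore := by
  induction k with
  | zero => simp [gridList]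
  | succ k ih =>
    rw [gridList, List.range_succ, List.flatMap_append, List.flatMap_singleton,
      List.pairwise_append]
    refine ⟨ih, ?_, fun x hx y hy => ?_⟩
    · refine List.pairwise_map.mpr ((List.pairwise_reverse.mpr List.pairwise_lt_range).imp ?_)
      exact fun h => Or.inr ⟨rfl, h⟩
    · obtain ⟨j, -, rfl⟩ := List.mem_map.mp hy
      exact Or.inl (mem_gridList.mp hx).1

theorem posList_eq_filter (k l : ℕ) (P : PD) :
    posList k l P = (gridList k l).filter (· ∈ P) := by
  simp only [posList, gridList, List.filter_flatMap, List.filter_map]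
  congr 1; funext i
  induction (List.range l).reverse with
  | nil => rfl
  | cons j L ih => by_cases h : (i, j) ∈ P <;> simp [h, ih]

theorem mem_posList {P : PD} {x : ℕ × ℕ} : x ∈ posList k l P ↔ x ∈ P ∧ x.1 < k ∧ x.2 < l := by
  simp [posList_eq_filter, mem_gridList, and_comm]

theorem pairwise_posList (k l : ℕ) (P : PD) : (posList k l P).Pairwise ReadsBefore :=
  posList_eq_filter k l P ▸ (pairwise_gridList k l).filter _

theorem nodup_posList (k l : ℕ) (P : PD) : (posList k l P).Nodup :=
  (pairwise_posList k l P).nodup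

theorem length_posList {P : PD} (h : InGrid k l P) : (posList k l P).length = P.card := by
  rw [← List.toFinset_card_of_nodup (nodup_posList k l P)]
  congr 1
  ext x
  simpa [mem_posList] using h x

theorem length_pdWord {P : PD} (h : InGrid k l P) : (pdWord k l P).length = P.card := by
  rw [pdWord, List.length_map, length_posList h]

theorem pdWord_empty (k l : ℕ) : pdWord k l ∅ = [] := by
  simp [pdWord, posList_eq_filter]

theorem posList_eq_filter_of_subset {P D : PD} (h : D ⊆ P) :
    posList k l D = (posList k l P).filter (· ∈ D) := by
  simp only [posList_eq_filter, List.filter_filter]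
  refine List.filter_congr fun x _ => ?_
  by_cases hx : x ∈ D
  · simp [hx, h hx]
  · simp [hx]

theorem posList_eq_of_mem_iff {P : PD} {L : List (ℕ × ℕ)} (hL : L.Pairwise ReadsBefore)
    (h : ∀ x, x ∈ L ↔ x ∈ P ∧ x.1 < k ∧ x.2 < l) : posList k l P = L :=
  (pairwise_posList k l P).eq_of_mem_iff hL fun x => by rw [mem_posList, h]

theorem exists_posList_eq_append_last {Q : PD} (hQ : InGrid k l Q) (hne : Q.Nonempty) :
    ∃ c ∈ Q, (∀ x ∈ Q, ¬ ReadsBefore c x) ∧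
      posList k l Q = posList k l (Q.erase c) ++ [c] := by
  obtain ⟨x₀, hx₀⟩ := hne
  have hnil : posList k l Q ≠ [] := List.ne_nil_of_mem (mem_posList.mpr ⟨hx₀, hQ x₀ hx₀⟩)
  set c := (posList k l Q).getLast hnil
  have hsplit := (List.dropLast_append_getLast hnil).symm
  have hcQ : c ∈ Q := (mem_posList.mp (List.getLast_mem hnil)).1
  have hlast : ∀ x ∈ Q, x ≠ c → ReadsBefore x c := by
    intro x hx hxc
    have hpair := pairwise_posList k l Q
    have hmem := mem_posList.mpr ⟨hx, hQ x hx⟩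
    rw [hsplit, List.pairwise_append] at hpair
    rw [hsplit, List.mem_append, List.mem_singleton] at hmem
    exact hpair.2.2 x (hmem.resolve_right hxc) c (List.mem_singleton_self c)
  refine ⟨c, hcQ, fun x hx hcx => ?_, posList_eq_of_mem_iff ?_ fun x => ?_⟩
  · by_cases hxc : x = c
    · exact Std.Irrefl.irrefl c (hxc ▸ hcx)
    · exact (hlast x hx hxc).asymm hcx
  · refine List.pairwise_append.mpr ⟨pairwise_posList k l _, List.pairwise_singleton _ _, ?_⟩
    intro x hx y hy
    rw [List.mem_singleton.mp hy]
    obtain ⟨⟨hxc, hx⟩, -⟩ := by simpa [mem_posList] using hx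
    exact hlast x hx hxc
  · by_cases hxc : x = c
    · subst hxc; simpa [mem_posList, hcQ] using hQ _ hcQ
    · simp [mem_posList, hxc]

theorem mem_take_iff_readsBefore {L : List (ℕ × ℕ)} (hL : L.Pairwise ReadsBefore) {t : ℕ}
    (ht : t < L.length) {x : ℕ × ℕ} : x ∈ L.take t ↔ x ∈ L ∧ ReadsBefore x L[t] := by
  rw [List.pairwise_iff_getElem] at hL
  constructor
  · intro hx
    obtain ⟨i, hi, rfl⟩ := List.mem_iff_getElem.mp hx
    rw [List.length_take] at hi
    rw [List.getElem_take]
    exact ⟨List.getElem_mem _, hL i t _ ht (by omega)⟩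
  · rintro ⟨hx, hxt⟩
    obtain ⟨i, hi, rfl⟩ := List.mem_iff_getElem.mp hx
    rcases lt_trichotomy i t with hit | rfl | hti
    · rw [← List.getElem_take (j := t) (h := by simp; omega)]
      exact List.getElem_mem _
    · exact absurd hxt (Std.Irrefl.irrefl _)
    · exact absurd hxt (hL t i ht hi hti).asymm

theorem filter_take_posList {P D : PD} (hsub : D ⊆ P) {t : ℕ}
    (ht : t < (posList k l P).length) :
    ((posList k l P).take t).filter (· ∈ D) =
      posList k l (D.filter (ReadsBefore · (posList k l P)[t])) := by
  refine (posList_eq_of_mem_iff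
    (((pairwise_posList k l P).sublist (List.take_sublist _ _)).filter _) fun x => ?_).symm
  rw [List.mem_filter, mem_take_iff_readsBefore (pairwise_posList k l P) ht, mem_posList,
    Finset.mem_filter, decide_eq_true_iff]
  constructor
  · rintro ⟨⟨⟨-, hgrid⟩, hbefore⟩, hxD⟩
    exact ⟨⟨hxD, hbefore⟩, hgrid⟩
  · rintro ⟨⟨hxD, hbefore⟩, hgrid⟩
    exact ⟨⟨⟨hsub hxD, hgrid⟩, hbefore⟩, hxD⟩

end ReadingOrder

section Pipes

variable {k l : ℕ} {P : PD}

def PipeStep (l : ℕ) (P : PD) (s t : ℕ × ℕ × Bool) : Prop := nextState l P s = some t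

def Reach (l : ℕ) (P : PD) : ℕ × ℕ × Bool → ℕ × ℕ × Bool → Prop := ReflTransGen (PipeStep l P)

theorem pipeStep_cases {s t : ℕ × ℕ × Bool} (h : PipeStep l P s t) :
    (t = (s.1, s.2.1 + 1, true) ∧ s.2.1 + 1 < l) ∨ (t = (s.1 - 1, s.2.1, false) ∧ 0 < s.1) := by
  simp only [PipeStep, nextState] at h
  split_ifs at h <;> simp_all

theorem pipeStep_leftUnique (l : ℕ) (P : PD) : Relator.LeftUnique (PipeStep l P) := by
  rintro ⟨i, j, b⟩ ⟨i', j', b'⟩ t h h'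
  simp only [PipeStep, nextState] at h h'
  split_ifs at h h' <;> grind

theorem pipeStep_north_of_not_mem {i j : ℕ} (h : (i + 1, j) ∉ P) :
    PipeStep l P (i + 1, j, true) (i, j, false) := by
  simp [PipeStep, nextState, h]

theorem pipeStep_east_of_not_mem {i j : ℕ} (h : (i, j) ∉ P) (hj : j + 1 < l) :
    PipeStep l P (i, j, false) (i, j + 1, true) := by
  simp [PipeStep, nextState, h, hj]

theorem nextState_congr {P' : PD} {s : ℕ × ℕ × Bool}
    (h : (s.1, s.2.1) ∈ P ↔ (s.1, s.2.1) ∈ P') : nextState l P s = nextState l P' s := by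
  simp only [nextState, h]

theorem nextState_flip_of_mem_of_not_mem {P' : PD} {c : ℕ × ℕ} (hP : c ∈ P) (hP' : c ∉ P')
    (d : Bool) : nextState l P (c.1, c.2, d) = nextState l P' (c.1, c.2, !d) := by
  cases d <;> simp [nextState, hP, hP']

theorem Reach.le {s x : ℕ × ℕ × Bool} (h : Reach l P s x) : x.1 ≤ s.1 ∧ s.2.1 ≤ x.2.1 := by
  induction h with
  | refl => omega
  | tail _ hstep ih => rcases pipeStep_cases hstep with ⟨rfl, -⟩ | ⟨rfl, -⟩ <;> dsimp <;> omega

theorem Reach.total_of_same_source {s y y' : ℕ × ℕ × Bool} (h : Reach l P s y)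
    (h' : Reach l P s y') : Reach l P y y' ∨ Reach l P y' y :=
  ReflTransGen.total_of_right_unique
    (fun _ _ _ h h' => Option.some_injective _ (h.symm.trans h')) h h'

theorem Reach.total_of_same_target {s s' y : ℕ × ℕ × Bool} (h : Reach l P s y)
    (h' : Reach l P s' y) : Reach l P s s' ∨ Reach l P s' s := by
  rcases ReflTransGen.total_of_right_unique (r := Function.swap (PipeStep l P))
      (fun _ _ _ h h' => pipeStep_leftUnique l P h h')
      (reflTransGen_swap.mpr h) (reflTransGen_swap.mpr h') with h | h
  exacts [Or.inr (reflTransGen_swap.mp h), Or.inl (reflTransGen_swap.mp h)]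

theorem Reach.congr {P' : PD} {s x : ℕ × ℕ × Bool}
    (hagree : ∀ z, Reach l P s z → ((z.1, z.2.1) ∈ P ↔ (z.1, z.2.1) ∈ P'))
    (h : Reach l P s x) : Reach l P' s x := by
  induction h with
  | refl => exact .refl
  | tail hsz hstep ih =>
    refine ih.tail ?_
    rw [PipeStep, ← nextState_congr (hagree _ hsz)]
    exact hstep

def entryState (k b : ℕ) : ℕ × ℕ × Bool :=
  if b < k then (b, 0, true) else (k - 1, b - k, false)

theorem entryState_injective (k : ℕ) : Function.Injective (entryState k) := by
  intro a b h
  unfold entryState at h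
  split_ifs at h <;> simp only [Prod.mk.injEq, reduceCtorEq, and_false] at h <;> omega

theorem fst_entryState_le (k b : ℕ) : (entryState k b).1 ≤ k - 1 := by
  unfold entryState; split_ifs <;> dsimp <;> omega

theorem not_pipeStep_entryState {b : ℕ} {z : ℕ × ℕ × Bool} (hz : z.1 ≤ k - 1) :
    ¬ PipeStep l P z (entryState k b) := by
  intro h
  unfold entryState at h
  split_ifs at h <;> rcases pipeStep_cases h with ⟨h, -⟩ | ⟨h, hpos⟩ <;>
    simp only [Prod.mk.injEq, reduceCtorEq, and_false, false_and] at h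
  · omega

/-- Pipes never return to the boundary, so each state is reached by at most one entering pipe. -/
theorem eq_of_reach_entryState {a b : ℕ} {x : ℕ × ℕ × Bool}
    (ha : Reach l P (entryState k a) x) (hb : Reach l P (entryState k b) x) : a = b := by
  suffices key : ∀ a b, Reach l P (entryState k a) (entryState k b) → a = b by
    rcases ha.total_of_same_target hb with h | h
    exacts [key a b h, (key b a h).symm]
  intro a b h
  rcases ReflTransGen.cases_tail h with h | ⟨z, hz, hstep⟩
  · exact entryState_injective k h.symm
  · exact absurd hstep (not_pipeStep_entryState ((Reach.le hz).1.trans (fst_entryState_le k a)))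

theorem reach_of_mem_traj {f : ℕ} {s x : ℕ × ℕ × Bool} (h : x ∈ traj l P f s) :
    Reach l P s x := by
  induction f generalizing s with
  | zero =>
    rw [traj, List.mem_singleton] at h
    exact h ▸ .refl
  | succ f ih =>
    rw [traj, List.mem_cons] at h
    rcases h with rfl | h
    · exact .refl
    · cases hs : nextState l P s with
      | none => simp [hs] at h
      | some s' =>
        rw [hs] at h
        exact ReflTransGen.head hs (ih h)

theorem mem_traj_of_reach {s x : ℕ × ℕ × Bool} (h : Reach l P s x) {f : ℕ}
    (hf : s.1 + (l - s.2.1) ≤ f) : x ∈ traj l P f s := by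
  induction h using ReflTransGen.head_induction_on generalizing f with
  | refl => cases f <;> simp [traj]
  | head hstep _ ih =>
    have hdec := pipeStep_cases hstep
    obtain ⟨f, rfl⟩ : ∃ f', f = f' + 1 := ⟨f - 1, by omega⟩
    rw [traj, hstep]
    refine List.mem_cons_of_mem _ (ih ?_)
    rcases hdec with ⟨rfl, _⟩ | ⟨rfl, _⟩ <;> dsimp <;> omega

theorem passesThrough_iff {s : ℕ × ℕ × Bool} (hs : s.1 < k) {c : ℕ × ℕ} :
    passesThrough k l P s c ↔ ∃ d, Reach l P s (c.1, c.2, d) := by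
  constructor
  · rintro ⟨x, hx, rfl⟩
    exact ⟨x.2.2, reach_of_mem_traj hx⟩
  · rintro ⟨d, h⟩
    exact ⟨_, mem_traj_of_reach (f := k + l + 2) h (by omega), rfl⟩

theorem reach_south_of_reach_west {i j : ℕ} (hi : i < k)
    (hlast : ∀ x ∈ P, ¬ ReadsBefore (i, j) x)
    (hW : i + 1 < k → Reach l P (entryState k (i + 1 + j)) (i + 1, j, true)) :
    Reach l P (entryState k (i + j + 1)) (i, j, false) := by
  by_cases hik : i + 1 < k
  · rw [show i + j + 1 = i + 1 + j by omega]
    exact (hW hik).tail (pipeStep_north_of_not_mem fun h => hlast _ h (Or.inl (by simp)))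
  · rw [entryState, if_neg (by omega), show k - 1 = i by omega, show i + j + 1 - k = j by omega]
    exact .refl

/-- The tiles read after `(i, j)` are elbows, so the pipes entering with indices `i + j` and
`i + j + 1` zigzag through them into `(i, j)`. -/
theorem reach_west_of_last {i j : ℕ} (hi : i < k) (hj : j < l)
    (hlast : ∀ x ∈ P, ¬ ReadsBefore (i, j) x) :
    Reach l P (entryState k (i + j)) (i, j, true) := by
  induction j generalizing i with
  | zero =>
    rw [add_zero, entryState, if_pos hi]
    exact .refl
  | succ j ih =>
    have hS := reach_south_of_reach_west hi
      (fun x hx hx' => hlast x hx (by unfold ReadsBefore at *; omega))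
      fun hik => ih hik (by omega) fun x hx hx' => hlast x hx (by unfold ReadsBefore at *; omega)
    rw [← add_assoc]
    exact hS.tail (pipeStep_east_of_not_mem (fun h => hlast _ h (Or.inr (by simp))) hj)

theorem reach_south_of_last {i j : ℕ} (hi : i < k) (hj : j < l)
    (hlast : ∀ x ∈ P, ¬ ReadsBefore (i, j) x) :
    Reach l P (entryState k (i + j + 1)) (i, j, false) :=
  reach_south_of_reach_west hi hlast fun hik =>
    reach_west_of_last hik hj fun x hx hx' => hlast x hx (by unfold ReadsBefore at *; omega)

/-- A state outside the quadrant southwest of `e` is reached only after passing `e`, and from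
`e` on the two pipes coincide. -/
theorem Reach.of_nextState_eq {Q Q' : PD} {e : ℕ × ℕ} {d d' : Bool} {s s' x : ℕ × ℕ × Bool}
    (hs : Reach l Q s (e.1, e.2, d)) (hs' : Reach l Q' s' (e.1, e.2, d'))
    (hnext : nextState l Q (e.1, e.2, d) = nextState l Q' (e.1, e.2, d'))
    (hagree : ∀ c : ℕ × ℕ, c.1 ≤ e.1 → e.2 ≤ c.2 → c ≠ e → (c ∈ Q ↔ c ∈ Q'))
    (hx : ¬ (e.1 ≤ x.1 ∧ x.2.1 ≤ e.2)) (h : Reach l Q s x) : Reach l Q' s' x := by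
  rcases hs.total_of_same_source h with hex | hxe
  · rcases ReflTransGen.cases_head hex with rfl | ⟨y, hey, hyx⟩
    · exact absurd ⟨le_rfl, le_rfl⟩ hx
    · have hy : y.1 ≤ e.1 ∧ e.2 ≤ y.2.1 ∧ (y.1 < e.1 ∨ e.2 < y.2.1) := by
        rcases pipeStep_cases hey with ⟨rfl, -⟩ | ⟨rfl, _⟩ <;> dsimp <;> omega
      refine hs'.trans (ReflTransGen.head (by rw [PipeStep, ← hnext]; exact hey)
        (Reach.congr (fun z hz => ?_) hyx))
      have hz := Reach.le hz
      refine hagree _ (by dsimp; omega) (by dsimp; omega) fun hze => ?_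
      obtain ⟨h1, h2⟩ := Prod.ext_iff.mp hze
      dsimp at h1 h2
      omega
  · exact absurd (Reach.le hxe) hx

end Pipes

section Crossings

variable {k l : ℕ} {Q : PD} {c : ℕ × ℕ}

def Crosses (l : ℕ) (Q : PD) (s t : ℕ × ℕ × Bool) : Prop :=
  ∃ c ∈ Q, ∃ d, Reach l Q s (c.1, c.2, d) ∧ Reach l Q t (c.1, c.2, !d)

theorem tile_ne_of_reach_entryState {a : ℕ} {z : ℕ × ℕ × Bool}
    (hW : Reach l Q (entryState k (c.1 + c.2)) (c.1, c.2, true))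
    (hS : Reach l Q (entryState k (c.1 + c.2 + 1)) (c.1, c.2, false))
    (ha : a ≠ c.1 + c.2) (ha' : a ≠ c.1 + c.2 + 1) (hz : Reach l Q (entryState k a) z) :
    (z.1, z.2.1) ≠ c := by
  rintro rfl
  obtain ⟨i, j, d⟩ := z
  cases d
  exacts [ha' (eq_of_reach_entryState hz hS), ha (eq_of_reach_entryState hz hW)]

theorem reach_entryState_erase_iff (hcQ : c ∈ Q) (hck : c.1 < k) (hcl : c.2 < l)
    (hlast : ∀ x ∈ Q, ¬ ReadsBefore c x) (a : ℕ) {x : ℕ × ℕ × Bool}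
    (hx : (x.1, x.2.1) ∈ Q.erase c) :
    Reach l Q (entryState k a) x ↔
      Reach l (Q.erase c) (entryState k (sGen (c.1 + c.2) a)) x := by
  have hlast' : ∀ x ∈ Q.erase c, ¬ ReadsBefore c x :=
    fun x hx => hlast x (Finset.mem_of_mem_erase hx)
  have hW := reach_west_of_last hck hcl hlast
  have hS := reach_south_of_last hck hcl hlast
  have hW' := reach_west_of_last hck hcl hlast'
  have hS' := reach_south_of_last hck hcl hlast'
  have hagree : ∀ y : ℕ × ℕ, y ≠ c → (y ∈ Q ↔ y ∈ Q.erase c) := fun y hyc => by simp [hyc]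
  have hflip := nextState_flip_of_mem_of_not_mem (l := l) hcQ (Finset.notMem_erase c Q)
  have hxc := (readsBefore_of_not_readsBefore (Finset.ne_of_mem_erase hx)
    (hlast _ (Finset.mem_of_mem_erase hx))).not_le
  by_cases ha : a = c.1 + c.2
  · subst ha
    rw [sGen, Equiv.swap_apply_left]
    exact ⟨Reach.of_nextState_eq hW hS' (hflip true) (fun y _ _ => hagree y) hxc,
      Reach.of_nextState_eq hS' hW (hflip true).symm (fun y _ _ hy => (hagree y hy).symm) hxc⟩
  by_cases ha' : a = c.1 + c.2 + 1
  · subst ha'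
    rw [sGen, Equiv.swap_apply_right]
    exact ⟨Reach.of_nextState_eq hS hW' (hflip false) (fun y _ _ => hagree y) hxc,
      Reach.of_nextState_eq hW' hS (hflip false).symm (fun y _ _ hy => (hagree y hy).symm) hxc⟩
  rw [sGen, Equiv.swap_apply_of_ne_of_ne ha ha']
  exact ⟨Reach.congr fun z hz => hagree _ (tile_ne_of_reach_entryState hW hS ha ha' hz),
    Reach.congr fun z hz => (hagree _ (tile_ne_of_reach_entryState hW' hS' ha ha' hz)).symm⟩

theorem crosses_erase_last_iff (hcQ : c ∈ Q) (hck : c.1 < k) (hcl : c.2 < l)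
    (hlast : ∀ x ∈ Q, ¬ ReadsBefore c x) {a b : ℕ} (hab : a < b)
    (hne : ¬(a = c.1 + c.2 ∧ b = c.1 + c.2 + 1)) :
    Crosses l Q (entryState k a) (entryState k b) ↔
      Crosses l (Q.erase c) (entryState k (sGen (c.1 + c.2) a))
        (entryState k (sGen (c.1 + c.2) b)) := by
  have hiff := reach_entryState_erase_iff hcQ hck hcl hlast
  constructor
  · rintro ⟨y, hyQ, d, ha, hb⟩
    have hyc : y ≠ c := by
      rintro rfl
      have hW := reach_west_of_last hck hcl hlast
      have hS := reach_south_of_last hck hcl hlast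
      cases d
      · have := eq_of_reach_entryState ha hS
        have := eq_of_reach_entryState hb hW
        omega
      · exact hne ⟨eq_of_reach_entryState ha hW, eq_of_reach_entryState hb hS⟩
    have hy : y ∈ Q.erase c := Finset.mem_erase.mpr ⟨hyc, hyQ⟩
    exact ⟨y, hy, d, (hiff a hy).mp ha, (hiff b hy).mp hb⟩
  · rintro ⟨y, hy, d, ha, hb⟩
    exact ⟨y, Finset.mem_of_mem_erase hy, d, (hiff a hy).mpr ha, (hiff b hy).mpr hb⟩

theorem crosses_entryState_iff (hQ : InGrid k l Q) (hred : clen (pdDelta k l Q) = Q.card)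
    {a b : ℕ} (hab : a < b) (hb : b < k + l) :
    Crosses l Q (entryState k a) (entryState k b) ↔ pdDelta k l Q b < pdDelta k l Q a := by
  induction Q using Finset.strongInduction generalizing a b with
  | H Q ih =>
  rcases Q.eq_empty_or_nonempty with rfl | hne
  · simp only [pdDelta, pdWord_empty, demWord, List.foldl_nil, Equiv.Perm.one_apply]
    exact iff_of_false (fun ⟨_, h, _⟩ => Finset.notMem_empty _ h) (by omega)
  obtain ⟨c, hcQ, hlast, hsplit⟩ := exists_posList_eq_append_last hQ hne
  obtain ⟨hck, hcl⟩ := hQ c hcQ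
  have hQ' : InGrid k l (Q.erase c) := fun x hx => hQ x (Finset.mem_of_mem_erase hx)
  have hword : pdWord k l Q = pdWord k l (Q.erase c) ++ [c.1 + c.2] := by
    rw [pdWord, hsplit, List.map_append, pdWord, List.map_singleton]
  obtain ⟨hred', hasc, hmul⟩ := demWord_concat_of_clen_eq (ws := pdWord k l (Q.erase c))
    (a := c.1 + c.2) (by
      rw [← hword, length_pdWord hQ', Finset.card_erase_of_mem hcQ]
      have := Finset.card_pos.mpr hne
      exact hred.trans (by omega))
  have hδ : ∀ x, pdDelta k l Q x = pdDelta k l (Q.erase c) (sGen (c.1 + c.2) x) := by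
    intro x
    rw [pdDelta, hword, hmul]
    rfl
  by_cases hm : a = c.1 + c.2 ∧ b = c.1 + c.2 + 1
  · obtain ⟨rfl, rfl⟩ := hm
    refine iff_of_true ⟨c, hcQ, true, reach_west_of_last hck hcl hlast,
      reach_south_of_last hck hcl hlast⟩ ?_
    rw [hδ, hδ, sGen, Equiv.swap_apply_left, Equiv.swap_apply_right]
    exact hasc
  rw [crosses_erase_last_iff hcQ hck hcl hlast hab hm, hδ, hδ]
  exact ih _ (Finset.erase_ssubset hcQ) hQ' (hred'.trans (length_pdWord hQ'))
    (sGen_lt_sGen hab hm) (by rw [sGen_apply]; split_ifs <;> omega)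

/-- The two pipes through `e` are the pipes with entry indices `e.1 + e.2` and `e.1 + e.2 + 1`
of the pipe dream formed by the crossings read before `e`. -/
theorem absorbable_iff_pdDelta_lt {D : PD} {e : ℕ × ℕ} (hek : e.1 < k) (hel : e.2 < l)
    (heD : e ∉ D) (hD : InGrid k l D)
    (hred : clen (pdDelta k l (D.filter (ReadsBefore · e))) = (D.filter (ReadsBefore · e)).card) :
    Absorbable k l D e ↔
      pdDelta k l (D.filter (ReadsBefore · e)) (e.1 + e.2 + 1) <
        pdDelta k l (D.filter (ReadsBefore · e)) (e.1 + e.2) := by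
  set Q := D.filter (ReadsBefore · e)
  have hQ : InGrid k l Q := fun x hx => hD x (Finset.mem_of_mem_filter x hx)
  have hlast : ∀ x ∈ Q, ¬ ReadsBefore e x := fun x hx => (Finset.mem_filter.mp hx).2.asymm
  have hW := reach_west_of_last hek hel hlast
  have hS := reach_south_of_last hek hel hlast
  have hagree : ∀ y : ℕ × ℕ, y.1 ≤ e.1 → e.2 ≤ y.2 → y ≠ e → (y ∈ Q ↔ y ∈ D) :=
    fun y h1 h2 hne => by simp [Q, readsBefore_of_le h1 h2 hne]
  have hnext : ∀ d, nextState l Q (e.1, e.2, d) = nextState l D (e.1, e.2, d) := fun d =>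
    nextState_congr (iff_of_false (fun h => heD (Finset.mem_of_mem_filter _ h)) heD)
  have transfer : ∀ {m d} {x : ℕ × ℕ × Bool}, Reach l Q (entryState k m) (e.1, e.2, d) →
      ReadsBefore (x.1, x.2.1) e →
      (Reach l Q (entryState k m) x ↔ Reach l D (e.1, e.2, d) x) := fun hm hx =>
    ⟨Reach.of_nextState_eq hm .refl (hnext _) hagree hx.not_le,
      Reach.of_nextState_eq .refl hm (hnext _).symm
        (fun y h1 h2 hne => (hagree y h1 h2 hne).symm) hx.not_le⟩
  rw [← crosses_entryState_iff hQ hred (Nat.lt_add_one _) (by omega)]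
  simp only [Absorbable, hek, hel, heD, not_false_eq_true, true_and,
    passesThrough_iff (s := (e.1, e.2, true)) hek, passesThrough_iff (s := (e.1, e.2, false)) hek]
  constructor
  · rintro ⟨c, hcD, ⟨d, hd⟩, ⟨d', hd'⟩⟩
    have hc := Reach.le hd
    have hce : ReadsBefore c e := readsBefore_of_le hc.1 hc.2 fun h => heD (h ▸ hcD)
    have hd := (transfer hW hce).mpr hd
    have hd' := (transfer hS hce).mpr hd'
    refine ⟨c, Finset.mem_filter.mpr ⟨hcD, hce⟩, d, hd, ?_⟩
    obtain rfl : d' = !d := by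
      cases d <;> cases d' <;> first | rfl | (have := eq_of_reach_entryState hd hd'; omega)
    exact hd'
  · rintro ⟨c, hcQ, d, hd, hd'⟩
    have hce := (Finset.mem_filter.mp hcQ).2
    exact ⟨c, Finset.mem_of_mem_filter c hcQ, ⟨d, (transfer hW hce).mp hd⟩,
      ⟨!d, (transfer hS hce).mp hd'⟩⟩

end Crossings

section Simplification

variable {k l : ℕ} {P D : PD} {t : ℕ}

def subwordDelta (k l : ℕ) (P D : PD) (t : ℕ) : Equiv.Perm ℕ :=
  demWord ((((posList k l P).take t).filter (· ∈ D)).map fun x => x.1 + x.2)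

theorem demWord_take_pdWord_succ (ht : t < (posList k l P).length) :
    demWord ((pdWord k l P).take (t + 1)) =
      demStep (demWord ((pdWord k l P).take t))
        ((posList k l P)[t].1 + (posList k l P)[t].2) := by
  rw [← demWord_concat, pdWord, ← List.map_take, ← List.map_take,
    List.take_succ_eq_append_getElem ht, List.map_append, List.map_singleton]

theorem subwordDelta_succ_of_mem (ht : t < (posList k l P).length)
    (h : (posList k l P)[t] ∈ D) :
    subwordDelta k l P D (t + 1) =
      demStep (subwordDelta k l P D t) ((posList k l P)[t].1 + (posList k l P)[t].2) := by
  rw [subwordDelta, subwordDelta, ← demWord_concat, List.take_succ_eq_append_getElem ht,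
    List.filter_append, List.filter_singleton, decide_eq_true h, cond_true, List.map_append,
    List.map_singleton]

theorem subwordDelta_succ_of_not_mem (ht : t < (posList k l P).length)
    (h : (posList k l P)[t] ∉ D) :
    subwordDelta k l P D (t + 1) = subwordDelta k l P D t := by
  rw [subwordDelta, subwordDelta, List.take_succ_eq_append_getElem ht, List.filter_append,
    List.filter_singleton, decide_eq_false h, cond_false, List.append_nil]

theorem subwordDelta_eq_pdDelta (hsub : D ⊆ P) (ht : t < (posList k l P).length) :
    subwordDelta k l P D t = pdDelta k l (D.filter (ReadsBefore · (posList k l P)[t])) := by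
  rw [subwordDelta, filter_take_posList hsub ht]
  rfl

/-- The letters of `D` read so far form a prefix of the reduced word of `D`. -/
theorem clen_subwordDelta (hsub : D ⊆ P)
    (hDred : clen (pdDelta k l D) = (pdWord k l D).length) (t : ℕ) :
    clen (subwordDelta k l P D t) = (((posList k l P).take t).filter (· ∈ D)).length := by
  have hpre := List.prefix_iff_eq_take.mp <| posList_eq_filter_of_subset (l := l) (k := k) hsub ▸
    (List.take_prefix t (posList k l P)).filter (· ∈ D)
  rw [subwordDelta, hpre, List.map_take, ← pdWord, clen_demWord_take hDred, List.length_take,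
    List.length_take, pdWord, List.length_map]

theorem clen_subwordDelta_succ_of_mem (hsub : D ⊆ P)
    (hDred : clen (pdDelta k l D) = (pdWord k l D).length)
    (ht : t < (posList k l P).length) (h : (posList k l P)[t] ∈ D) :
    clen (subwordDelta k l P D (t + 1)) = clen (subwordDelta k l P D t) + 1 := by
  rw [clen_subwordDelta hsub hDred, clen_subwordDelta hsub hDred,
    List.take_succ_eq_append_getElem ht, List.filter_append, List.length_append]
  simp [h]

theorem demStep_subwordDelta_eq_self_iff (hD : InGrid k l D) (hsub : D ⊆ P)
    (hDred : clen (pdDelta k l D) = (pdWord k l D).length) (ht : t < (posList k l P).length)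
    (he : (posList k l P)[t] ∉ D) :
    demStep (subwordDelta k l P D t) ((posList k l P)[t].1 + (posList k l P)[t].2) =
        subwordDelta k l P D t ↔ Absorbable k l D (posList k l P)[t] := by
  have hgrid := (mem_posList.mp (List.getElem_mem ht)).2
  have hQ : InGrid k l (D.filter (ReadsBefore · (posList k l P)[t])) :=
    fun x hx => hD x (Finset.mem_of_mem_filter x hx)
  have hred := clen_subwordDelta hsub hDred t
  rw [filter_take_posList hsub ht, length_posList hQ, subwordDelta_eq_pdDelta hsub ht] at hred
  rw [subwordDelta_eq_pdDelta hsub ht, absorbable_iff_pdDelta_lt hgrid.1 hgrid.2 he hD hred]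
  exact demStep_eq_self_iff (finite_inversions_demWord _)

theorem demWord_take_eq_subwordDelta
    (H : ∀ t (ht : t < (posList k l P).length), (posList k l P)[t] ∉ D →
      demWord ((pdWord k l P).take t) = subwordDelta k l P D t →
      demStep (demWord ((pdWord k l P).take t)) ((posList k l P)[t].1 + (posList k l P)[t].2) =
        demWord ((pdWord k l P).take t))
    (t : ℕ) : demWord ((pdWord k l P).take t) = subwordDelta k l P D t := by
  induction t with
  | zero => rfl
  | succ t ih =>
    by_cases ht : t < (posList k l P).length
    · rw [demWord_take_pdWord_succ ht]
      by_cases he : (posList k l P)[t] ∈ D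
      · rw [subwordDelta_succ_of_mem ht he, ih]
      · rw [subwordDelta_succ_of_not_mem ht he, H t ht he ih, ih]
    · have hlen : (posList k l P).length ≤ t := by omega
      have hlen' : (pdWord k l P).length ≤ t := by simpa [pdWord] using hlen
      rw [List.take_of_length_le (by omega), ← List.take_of_length_le hlen', ih, subwordDelta,
        subwordDelta, List.take_of_length_le hlen, List.take_of_length_le (by omega)]

theorem simplification_eq_of_absorbable (hP : InGrid k l P) (hD : InGrid k l D) (hsub : D ⊆ P)
    (hDred : clen (pdDelta k l D) = (pdWord k l D).length)
    (habs : ∀ e ∈ P, e ∉ D → Absorbable k l D e) : simplification k l P = D := by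
  have hinv := demWord_take_eq_subwordDelta fun t ht he hw => by
    rw [hw, (demStep_subwordDelta_eq_self_iff hD hsub hDred ht he).mpr
      (habs _ (mem_posList.mp (List.getElem_mem ht)).1 he)]
  ext x
  simp only [simplification, Finset.mem_filter]
  constructor
  · rintro ⟨hxP, hkeep⟩
    by_contra hxD
    obtain ⟨t, ht, rfl⟩ := List.getElem_of_mem (mem_posList.mpr ⟨hxP, hP x hxP⟩)
    exact hkeep t (List.getElem?_eq_getElem ht)
      (by rw [hinv, hinv, subwordDelta_succ_of_not_mem ht hxD])
  · intro hxD
    refine ⟨hsub hxD, fun t hget hEq => ?_⟩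
    obtain ⟨ht, rfl⟩ := List.getElem?_eq_some_iff.mp hget
    have := clen_subwordDelta_succ_of_mem hsub hDred ht hxD
    rw [← hinv, ← hinv, hEq] at this
    omega

theorem absorbable_of_simplification_eq (hP : InGrid k l P) (hD : InGrid k l D)
    (hDred : clen (pdDelta k l D) = (pdWord k l D).length) (hsimp : simplification k l P = D)
    {e : ℕ × ℕ} (heP : e ∈ P) (heD : e ∉ D) : Absorbable k l D e := by
  have hsub : D ⊆ P := hsimp ▸ Finset.filter_subset _ _
  have hdrop : ∀ t (ht : t < (posList k l P).length), (posList k l P)[t] ∉ D →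
      demWord ((pdWord k l P).take (t + 1)) = demWord ((pdWord k l P).take t) := by
    intro t ht he
    rw [← hsimp, simplification, Finset.mem_filter] at he
    push Not at he
    obtain ⟨t', hget, hEq⟩ := he (mem_posList.mp (List.getElem_mem ht)).1
    obtain ⟨ht', h⟩ := List.getElem?_eq_some_iff.mp hget
    rwa [(nodup_posList k l P).getElem_inj_iff.mp h] at hEq
  have hinv := demWord_take_eq_subwordDelta fun t ht he _ => by
    rw [← demWord_take_pdWord_succ ht, hdrop t ht he]
  obtain ⟨t, ht, rfl⟩ := List.getElem_of_mem (mem_posList.mpr ⟨heP, hP e heP⟩)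
  rw [← demStep_subwordDelta_eq_self_iff hD hsub hDred ht heD, ← hinv,
    ← demWord_take_pdWord_succ ht, hdrop t ht heD]

theorem simplification_eq_iff (hP : InGrid k l P) (hD : InGrid k l D)
    (hDred : clen (pdDelta k l D) = (pdWord k l D).length) :
    simplification k l P = D ↔ D ⊆ P ∧ ∀ e ∈ P, e ∉ D → Absorbable k l D e :=
  ⟨fun h => ⟨h ▸ Finset.filter_subset _ _,
      fun _ he heD => absorbable_of_simplification_eq hP hD hDred h he heD⟩,
    fun ⟨hsub, habs⟩ => simplification_eq_of_absorbable hP hD hsub hDred habs⟩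

end Simplification

end PipeDream

/-- **Simplification = absorbing elbow tiles.**
A pipe dream `P` simplifies to a reduced pipe dream `D` if and only if `P` is obtained
from `D` by changing some (possibly empty) set of absorbable elbow tiles of `D` into
crossing tiles. -/
theorem stmt15 (k l : ℕ) (P D : PD) (hP : InGrid k l P) (hD : InGrid k l D)
    (hDred : D.card = clen (pdDelta k l D)) :
    simplification k l P = D ↔
      ∃ S : Finset (ℕ × ℕ), (∀ e ∈ S, Absorbable k l D e) ∧ P = D ∪ S := by
  rw [PipeDream.simplification_eq_iff hP hD (by rw [PipeDream.length_pdWord hD, hDred])]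
  constructor
  · rintro ⟨hsub, habs⟩
    exact ⟨P \ D, fun e he => habs e (Finset.mem_sdiff.mp he).1 (Finset.mem_sdiff.mp he).2,
      (Finset.union_sdiff_of_subset hsub).symm⟩
  · rintro ⟨S, hS, rfl⟩
    exact ⟨Finset.subset_union_left,
      fun e he heD => hS e ((Finset.mem_union.mp he).resolve_left heD)⟩

end
end
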